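/- arXiv:2502.13536 — 5 statements merged into one kernel-verified Lean document; each statement's English description precedes it below -/
import Mathlib

section
/- For every partial assignment p on a set D of cells of an n×m Slant board whose diagonal graph G(p) is acyclic, there exists a full assignment f that agrees with p on every cell of D and whose diagonal graph G(f) is acyclic. -/
/-!
Slant boards.

An `n×m` Slant board has cells indexed by `Fin n × Fin m` and vertices indexed by
`Fin (n+1) × Fin (m+1)`.  The four corners of cell `(i,j)` are the vertices
`(i,j)`, `(i+1,j)`, `(i,j+1)`, `(i+1,j+1)`.  A full assignment is a function from
cells to `Bool`: `true` means the cell contains the diagonal joining its two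
corners with even coordinate sums, `false` the other diagonal.
-/

namespace Slant

abbrev Cell (n m : ℕ) := Fin n × Fin m
abbrev Vertex (n m : ℕ) := Fin (n + 1) × Fin (m + 1)

variable {n m : ℕ}

def corner00 (c : Cell n m) : Vertex n m := (c.1.castSucc, c.2.castSucc)
def corner10 (c : Cell n m) : Vertex n m := (c.1.succ, c.2.castSucc)
def corner01 (c : Cell n m) : Vertex n m := (c.1.castSucc, c.2.succ)
def corner11 (c : Cell n m) : Vertex n m := (c.1.succ, c.2.succ)

/-- The endpoints of the diagonal of cell `c` joining the two corners whose
coordinate sums are even. -/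
def evenDiag (c : Cell n m) : Vertex n m × Vertex n m :=
  if (c.1.val + c.2.val) % 2 = 0 then (corner00 c, corner11 c) else (corner10 c, corner01 c)

/-- The endpoints of the diagonal of cell `c` joining the two corners whose
coordinate sums are odd. -/
def oddDiag (c : Cell n m) : Vertex n m × Vertex n m :=
  if (c.1.val + c.2.val) % 2 = 0 then (corner10 c, corner01 c) else (corner00 c, corner11 c)

/-- The endpoints of the diagonal chosen in cell `c` by the assignment value `b`. -/
def diagEnds (c : Cell n m) (b : Bool) : Vertex n m × Vertex n m :=
  if b then evenDiag c else oddDiag c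

/-- The diagonal graph of the (partial) assignment `p`, using only the cells in `D`:
two vertices are adjacent iff the chosen diagonal of some cell in `D` joins them.
For a full assignment take `D = Set.univ`. -/
def DiagGraph (D : Set (Cell n m)) (p : Cell n m → Bool) : SimpleGraph (Vertex n m) :=
  SimpleGraph.fromRel (fun u v => ∃ c ∈ D, diagEnds c (p c) = (u, v))

/-- `v` is one of the four corners of cell `c`. -/
def isCorner (v : Vertex n m) (c : Cell n m) : Prop :=
  v = corner00 c ∨ v = corner10 c ∨ v = corner01 c ∨ v = corner11 c

/-- The chosen diagonal of cell `c` under assignment `f` passes through vertex `v`. -/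
def passesThrough (f : Cell n m → Bool) (c : Cell n m) (v : Vertex n m) : Prop :=
  (diagEnds c (f c)).1 = v ∨ (diagEnds c (f c)).2 = v

/-- The degree of a vertex in a graph on the board's vertices. -/
noncomputable def deg (G : SimpleGraph (Vertex n m)) (v : Vertex n m) : ℕ :=
  (G.neighborSet v).ncard

section Aux
open Finset

noncomputable def ind (T : Finset (ℤ × ℤ)) (z : ℤ × ℤ) : ZMod 2 := if z ∈ T then 1 else 0

noncomputable def wInd (T : Finset (ℤ × ℤ)) (v : ℤ × ℤ) : ZMod 2 :=
  ((T.filter (fun z => z.1 - z.2 = v.1 - v.2 ∧ z.1 + 1 ≤ v.1)).card : ZMod 2)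

lemma wInd_step (T : Finset (ℤ × ℤ)) (a b : ℤ) :
    wInd T (a + 1, b + 1) = wInd T (a, b) + ind T (a, b) := by
  classical
  unfold wInd ind
  have hsplit : T.filter (fun z => z.1 - z.2 = ((a+1 : ℤ), (b+1 : ℤ)).1 - ((a+1 : ℤ), (b+1 : ℤ)).2 ∧ z.1 + 1 ≤ ((a+1 : ℤ), (b+1 : ℤ)).1)
      = T.filter (fun z => z.1 - z.2 = a - b ∧ z.1 + 1 ≤ a) ∪ T.filter (fun z => z = (a, b)) := by
    ext z
    simp only [mem_filter, mem_union]
    constructor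
    · rintro ⟨hz, hd, hle⟩
      by_cases h : z.1 + 1 ≤ a
      · exact Or.inl ⟨hz, by omega, h⟩
      · refine Or.inr ⟨hz, ?_⟩
        have h1 : z.1 = a := by omega
        have h2 : z.2 = b := by omega
        exact Prod.ext h1 h2
    · rintro (⟨hz, hd, hle⟩ | ⟨hz, rfl⟩)
      · exact ⟨hz, by omega, by omega⟩
      · exact ⟨hz, by omega, by omega⟩
  have hdisj : Disjoint (T.filter (fun z => z.1 - z.2 = a - b ∧ z.1 + 1 ≤ a))
      (T.filter (fun z => z = (a, b))) := by
    rw [disjoint_left]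
    rintro z hz1 hz2
    simp only [mem_filter] at hz1 hz2
    rcases hz2 with ⟨-, rfl⟩
    omega
  rw [hsplit, card_union_of_disjoint hdisj, Finset.filter_eq']
  split_ifs with h
  · simp
  · simp

lemma two_mul_zmod (x : ZMod 2) : x + x = 0 := by
  have : (2 : ZMod 2) * x = 0 := by
    have : (2 : ZMod 2) = 0 := by decide
    rw [this, zero_mul]
  linear_combination this

lemma wInd_corner (T : Finset (ℤ × ℤ))
    (Hdeg : ∀ a b : ℤ, (a + b) % 2 = 0 →
      ind T (a, b) + ind T (a-1, b-1) + ind T (a-1, b) + ind T (a, b-1) = 0)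
    (a b : ℤ) (hab : (a + b) % 2 = 0) :
    wInd T (a+1, b) + wInd T (a, b+1) = ind T (a, b) := by
  classical
  -- telescoping down the diagonal
  have key : ∀ k : ℕ, wInd T (a+1, b) + wInd T (a, b+1) + ind T (a, b)
      = wInd T (a-k+1, b-k) + wInd T (a-k, b-k+1) + ind T (a-k, b-k) := by
    intro k
    induction k with
    | zero => norm_num
    | succ k ih =>
      rw [ih]
      set a' : ℤ := a - k with ha'
      set b' : ℤ := b - k with hb'
      have hpar : (a' + b') % 2 = 0 := by omega
      have e1 : wInd T (a'+1, b') = wInd T (a', b'-1) + ind T (a', b'-1) := by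
        have := wInd_step T a' (b'-1)
        simpa using this
      have e2 : wInd T (a', b'+1) = wInd T (a'-1, b') + ind T (a'-1, b') := by
        have := wInd_step T (a'-1) b'
        simpa using this
      have hd := Hdeg a' b' hpar
      have goalform : wInd T (a'+1, b') + wInd T (a', b'+1) + ind T (a', b')
          = wInd T (a'-1+1, b'-1) + wInd T (a'-1, b'-1+1) + ind T (a'-1, b'-1) := by
        rw [e1, e2]
        have h1 : (a'-1+1 : ℤ) = a' := by ring
        have h2 : (b'-1+1 : ℤ) = b' := by ring
        rw [h1, h2]
        -- goal: w(a',b'-1) + i(a',b'-1) + (w(a'-1,b') + i(a'-1,b')) + i(a',b')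
        --     = w(a', b'-1) + w(a'-1, b') + i(a'-1,b'-1)
        have : ind T (a', b'-1) + ind T (a'-1, b') + ind T (a', b') = ind T (a'-1, b'-1) := by
          have h0 := hd
          -- i(a,b) + i(a-1,b-1) + i(a-1,b) + i(a,b-1) = 0
          have := two_mul_zmod (ind T (a'-1, b'-1))
          linear_combination h0 - this
        linear_combination this
      have ha'' : (a - (k+1:ℕ) : ℤ) = a' - 1 := by push_cast; omega
      have hb'' : (b - (k+1:ℕ) : ℤ) = b' - 1 := by push_cast; omega
      rw [ha'', hb'']
      convert goalform using 3 <;> push_cast <;> ring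
  -- pick k large enough
  obtain ⟨M, hM⟩ : ∃ M : ℤ, ∀ z ∈ T, M ≤ z.1 := by
    rcases T.eq_empty_or_nonempty with rfl | hT
    · exact ⟨0, by simp⟩
    · exact ⟨(T.image Prod.fst).min' (hT.image _), fun z hz =>
        Finset.min'_le _ _ (Finset.mem_image_of_mem _ hz)⟩
  set k : ℕ := (a + 1 - M).toNat with hk
  have hak : (a - k : ℤ) < M := by omega
  have hz1 : wInd T (a-k+1, b-k) = 0 := by
    unfold wInd
    rw [Finset.filter_false_of_mem, Finset.card_empty]
    · rfl
    · rintro z hz ⟨-, hle⟩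
      have := hM z hz
      simp at hle
      omega
  have hz2 : wInd T (a-k, b-k+1) = 0 := by
    unfold wInd
    rw [Finset.filter_false_of_mem, Finset.card_empty]
    · rfl
    · rintro z hz ⟨-, hle⟩
      have := hM z hz
      simp at hle
      omega
  have hz3 : ind T (a-k, b-k) = 0 := by
    unfold ind
    rw [if_neg]
    intro hmem
    have := hM _ hmem
    simp at this
    omega
  have := key k
  rw [hz1, hz2, hz3] at this
  have h2 := two_mul_zmod (ind T (a, b))
  linear_combination this - h2

lemma eq_of_add_eq_zero_zmod2 {x y : ZMod 2} (h : x + y = 0) : x = y := by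
  have := two_mul_zmod y
  linear_combination h - this


def eDiagZ (z : ℤ × ℤ) : (ℤ × ℤ) × (ℤ × ℤ) :=
  if (z.1 + z.2) % 2 = 0 then ((z.1, z.2), (z.1 + 1, z.2 + 1)) else ((z.1 + 1, z.2), (z.1, z.2 + 1))

def touch (z u : ℤ × ℤ) : Prop := (eDiagZ z).1 = u ∨ (eDiagZ z).2 = u

instance : DecidablePred fun z : ℤ × ℤ => touch z u := fun z => by unfold touch; infer_instance

lemma touch_iff (z u : ℤ × ℤ) (hu : (u.1 + u.2) % 2 = 0) :
    touch z u ↔ z = u ∨ z = (u.1 - 1, u.2 - 1) ∨ z = (u.1 - 1, u.2) ∨ z = (u.1, u.2 - 1) := by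
  obtain ⟨a, b⟩ := u
  obtain ⟨x, y⟩ := z
  simp only [touch, eDiagZ, Prod.ext_iff, Prod.mk.injEq] at *
  split_ifs with h
  · simp only [Prod.mk.injEq]
    constructor
    · rintro (⟨h1, h2⟩ | ⟨h1, h2⟩) <;> omega
    · rintro (⟨h1, h2⟩ | ⟨h1, h2⟩ | ⟨h1, h2⟩ | ⟨h1, h2⟩) <;> omega
  · simp only [Prod.mk.injEq]
    constructor
    · rintro (⟨h1, h2⟩ | ⟨h1, h2⟩) <;> omega
    · rintro (⟨h1, h2⟩ | ⟨h1, h2⟩ | ⟨h1, h2⟩ | ⟨h1, h2⟩) <;> omega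

lemma touch_bounds {z u : ℤ × ℤ} (h : touch z u) :
    z.1 ≤ u.1 ∧ u.1 ≤ z.1 + 1 ∧ z.2 ≤ u.2 ∧ u.2 ≤ z.2 + 1 := by
  obtain ⟨a, b⟩ := u; obtain ⟨x, y⟩ := z
  simp only [touch, eDiagZ, Prod.ext_iff, Prod.mk.injEq] at h
  split_ifs at h <;> rcases h with ⟨h1, h2⟩ | ⟨h1, h2⟩ <;>
    (dsimp only at h1 h2 ⊢; refine ⟨?_, ?_, ?_, ?_⟩ <;> omega)

lemma four_ind (T : Finset (ℤ × ℤ)) (u : ℤ × ℤ) (hu : (u.1 + u.2) % 2 = 0) :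
    ind T u + ind T (u.1 - 1, u.2 - 1) + ind T (u.1 - 1, u.2) + ind T (u.1, u.2 - 1)
      = ((T.filter (fun z => touch z u)).card : ZMod 2) := by
  classical
  have hfe : T.filter (fun z => touch z u)
      = T.filter (fun z => z ∈ ({u, (u.1 - 1, u.2 - 1), (u.1 - 1, u.2), (u.1, u.2 - 1)} : Finset (ℤ × ℤ))) := by
    apply Finset.filter_congr
    intro z _
    simp [touch_iff z u hu]
  rw [hfe, Finset.filter_mem_eq_inter, Finset.inter_comm]
  have d1 : u ≠ (u.1 - 1, u.2 - 1) := by simp [Prod.ext_iff] <;> omega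
  have d2 : u ≠ (u.1 - 1, u.2) := by simp [Prod.ext_iff] <;> omega
  have d3 : u ≠ (u.1, u.2 - 1) := by simp [Prod.ext_iff] <;> omega
  have d4 : (u.1 - 1, u.2 - 1) ≠ (u.1 - 1, u.2) := by simp [Prod.ext_iff] <;> omega
  have d5 : (u.1 - 1, u.2 - 1) ≠ (u.1, u.2 - 1) := by simp [Prod.ext_iff] <;> omega
  have d6 : (u.1 - 1, u.2) ≠ (u.1, u.2 - 1) := by simp [Prod.ext_iff] <;> omega
  rw [show ({u, (u.1 - 1, u.2 - 1), (u.1 - 1, u.2), (u.1, u.2 - 1)} : Finset (ℤ × ℤ)) ∩ T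
      = ({u, (u.1 - 1, u.2 - 1), (u.1 - 1, u.2), (u.1, u.2 - 1)} : Finset (ℤ × ℤ)).filter (· ∈ T) by
    rw [Finset.filter_mem_eq_inter]]
  rw [Finset.filter_insert, Finset.filter_insert, Finset.filter_insert, Finset.filter_singleton]
  unfold ind
  split_ifs with h1 h2 h3 h4 <;>
    simp_all [Finset.card_insert_of_notMem, Finset.mem_insert, Finset.mem_filter] <;>
    push_cast <;> ring

def par (v : Vertex n m) : ℕ := (v.1.val + v.2.val) % 2

lemma diagEnds_ne (c : Cell n m) (b : Bool) : (diagEnds c b).1 ≠ (diagEnds c b).2 := by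
  cases b <;> simp only [diagEnds, evenDiag, oddDiag, if_true, if_false] <;> split_ifs <;>
    simp [corner00, corner01, corner10, corner11, Prod.ext_iff, Fin.ext_iff] <;> omega

lemma par_diagEnds_fst (c : Cell n m) (b : Bool) :
    par (diagEnds c b).1 = if b then 0 else 1 := by
  cases b <;> simp only [diagEnds, evenDiag, oddDiag, if_true, if_false] <;> split_ifs with h <;>
    simp [par, corner00, corner01, corner10, corner11] <;> omega

lemma par_diagEnds_snd (c : Cell n m) (b : Bool) :
    par (diagEnds c b).2 = if b then 0 else 1 := by
  cases b <;> simp only [diagEnds, evenDiag, oddDiag, if_true, if_false] <;> split_ifs with h <;>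
    simp [par, corner00, corner01, corner10, corner11] <;> omega

lemma adj_iff {D : Set (Cell n m)} {p : Cell n m → Bool} {x y : Vertex n m} :
    (DiagGraph D p).Adj x y ↔ x ≠ y ∧
      ∃ c' ∈ D, diagEnds c' (p c') = (x, y) ∨ diagEnds c' (p c') = (y, x) := by
  simp only [DiagGraph, SimpleGraph.fromRel_adj]
  constructor
  · rintro ⟨hne, ⟨c', hc', h⟩ | ⟨c', hc', h⟩⟩
    exacts [⟨hne, c', hc', Or.inl h⟩, ⟨hne, c', hc', Or.inr h⟩]
  · rintro ⟨hne, c', hc', h | h⟩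
    exacts [⟨hne, Or.inl ⟨c', hc', h⟩⟩, ⟨hne, Or.inr ⟨c', hc', h⟩⟩]

lemma adj_par {D : Set (Cell n m)} {p : Cell n m → Bool} {x y : Vertex n m}
    (h : (DiagGraph D p).Adj x y) : par x = par y := by
  rw [adj_iff] at h
  obtain ⟨-, c', -, h | h⟩ := h <;>
  · have h1 := par_diagEnds_fst c' (p c')
    have h2 := par_diagEnds_snd c' (p c')
    rw [h] at h1 h2
    simp at h1 h2
    omega

lemma walk_par {D : Set (Cell n m)} {p : Cell n m → Bool} {x y : Vertex n m}
    (W : (DiagGraph D p).Walk x y) : ∀ z ∈ W.support, par z = par x := by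
  induction W with
  | nil => intro z hz; simp at hz; rw [hz]
  | cons h q ih =>
    intro z hz
    rw [SimpleGraph.Walk.support_cons] at hz
    rcases List.mem_cons.mp hz with rfl | hz
    · rfl
    · rw [ih z hz, ← adj_par h]

lemma diag_inj {c₁ c₂ : Cell n m} {b₁ b₂ : Bool}
    (h : s((diagEnds c₁ b₁).1, (diagEnds c₁ b₁).2)
       = s((diagEnds c₂ b₂).1, (diagEnds c₂ b₂).2)) :
    c₁ = c₂ ∧ b₁ = b₂ := by
  cases b₁ <;> cases b₂ <;>
    simp only [diagEnds, evenDiag, oddDiag, if_true, if_false] at h <;>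
    split_ifs at h with h₁ h₂ <;>
    rw [Sym2.eq_iff] at h <;>
    rcases h with ⟨ha, hb⟩ | ⟨ha, hb⟩ <;>
    simp only [corner00, corner01, corner10, corner11, Prod.ext_iff, Fin.ext_iff,
      Fin.coe_castSucc, Fin.val_succ] at ha hb <;>
    obtain ⟨ha1, ha2⟩ := ha <;> obtain ⟨hb1, hb2⟩ := hb <;>
    refine ⟨Prod.ext (Fin.ext ?_) (Fin.ext ?_), ?_⟩ <;>
    first | rfl | omega | (exfalso; first | assumption | omega)


/-- integer coordinates of a vertex -/
def ι (v : Vertex n m) : ℤ × ℤ := ((v.1.val : ℤ), (v.2.val : ℤ))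
/-- integer coordinates of a cell -/
def ζ (c : Cell n m) : ℤ × ℤ := ((c.1.val : ℤ), (c.2.val : ℤ))

lemma ι_inj : Function.Injective (ι (n := n) (m := m)) := by
  rintro ⟨a, b⟩ ⟨c, d⟩ h
  simp only [ι, Prod.ext_iff, Fin.ext_iff] at h ⊢
  exact ⟨by exact_mod_cast h.1, by exact_mod_cast h.2⟩

lemma ζ_inj : Function.Injective (ζ (n := n) (m := m)) := by
  rintro ⟨a, b⟩ ⟨c, d⟩ h
  simp only [ζ, Prod.ext_iff, Fin.ext_iff] at h ⊢
  exact ⟨by exact_mod_cast h.1, by exact_mod_cast h.2⟩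

lemma eDiagZ_comm (c : Cell n m) :
    eDiagZ (ζ c) = (ι (evenDiag c).1, ι (evenDiag c).2) := by
  by_cases h : (c.1.val + c.2.val) % 2 = 0
  · have h' : ((ζ c).1 + (ζ c).2) % 2 = 0 := by
      simp only [ζ]; omega
    simp [eDiagZ, evenDiag, h, h', ι, ζ, corner00, corner11, Prod.ext_iff]
    omega
  · have h' : ¬ ((ζ c).1 + (ζ c).2) % 2 = 0 := by
      simp only [ζ]; omega
    simp [eDiagZ, evenDiag, h, h', ι, ζ, corner10, corner01, Prod.ext_iff]
    omega

lemma touch_iff_mem (c' : Cell n m) (x : Vertex n m) :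
    touch (ζ c') (ι x) ↔ x ∈ s((evenDiag c').1, (evenDiag c').2) := by
  rw [Sym2.mem_iff]
  unfold touch
  rw [eDiagZ_comm]
  constructor
  · rintro (h | h)
    · exact Or.inl (ι_inj h.symm)
    · exact Or.inr (ι_inj h.symm)
  · rintro (rfl | rfl)
    · exact Or.inl rfl
    · exact Or.inr rfl


lemma ι_corner00 (c : Cell n m) : ι (corner00 c) = ((ζ c).1, (ζ c).2) := by
  simp [ι, ζ, corner00, Prod.ext_iff]
lemma ι_corner10 (c : Cell n m) : ι (corner10 c) = ((ζ c).1 + 1, (ζ c).2) := by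
  simp [ι, ζ, corner10, Prod.ext_iff]
lemma ι_corner01 (c : Cell n m) : ι (corner01 c) = ((ζ c).1, (ζ c).2 + 1) := by
  simp [ι, ζ, corner01, Prod.ext_iff]
lemma ι_corner11 (c : Cell n m) : ι (corner11 c) = ((ζ c).1 + 1, (ζ c).2 + 1) := by
  simp [ι, ζ, corner11, Prod.ext_iff]

lemma natCast_zmod2_eq (k : ℕ) : (k : ZMod 2) = if Even k then 0 else 1 := by
  split_ifs with h
  · rw [ZMod.natCast_eq_zero_iff]
    exact h.two_dvd
  · have h1 : k % 2 = 1 := Nat.odd_iff.mp (Nat.not_even_iff_odd.mp h)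
    rw [← ZMod.natCast_mod, h1, Nat.cast_one]

lemma no_both {D : Set (Cell n m)} {p : Cell n m → Bool} {c : Cell n m} (hc : c ∉ D)
    (h0 : (DiagGraph D p).Reachable (evenDiag c).1 (evenDiag c).2)
    (h1 : (DiagGraph D p).Reachable (oddDiag c).1 (oddDiag c).2) : False := by
  classical
  obtain ⟨w0⟩ := h0
  set G := DiagGraph D p with hG
  set W : G.Walk (evenDiag c).1 (evenDiag c).2 := w0.toPath.1 with hWdef
  have hWp : W.IsPath := w0.toPath.2
  have hpar_u : par (evenDiag c).1 = 0 := by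
    have := par_diagEnds_fst c true; simpa [diagEnds] using this
  have hpar_odd1 : par (oddDiag c).1 = 1 := by
    have := par_diagEnds_fst c false; simpa [diagEnds] using this
  have huv : (evenDiag c).1 ≠ (evenDiag c).2 := by
    have := diagEnds_ne c true; simpa [diagEnds] using this
  -- every edge of W comes from a `true` cell of D
  have edge_char : ∀ e ∈ W.edges, ∃ c', c' ∈ D ∧ p c' = true ∧
      e = s((evenDiag c').1, (evenDiag c').2) := by
    intro e he
    have hes := W.edges_subset_edgeSet he
    induction e using Sym2.ind with
    | _ x y =>
      rw [SimpleGraph.mem_edgeSet] at hes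
      have hx : x ∈ W.support := W.fst_mem_support_of_mem_edges he
      have hy : y ∈ W.support := W.snd_mem_support_of_mem_edges he
      have hpx : par x = 0 := by rw [walk_par W x hx, hpar_u]
      have hpy : par y = 0 := by rw [walk_par W y hy, hpar_u]
      rw [adj_iff] at hes
      obtain ⟨-, c', hc', hd | hd⟩ := hes
      · by_cases hb : p c' = true
        · rw [hb] at hd
          refine ⟨c', hc', hb, ?_⟩
          have h' : evenDiag c' = (x, y) := by simpa [diagEnds] using hd
          rw [h']
        · exfalso
          have hbf : p c' = false := by simpa using hb
          have hh := par_diagEnds_fst c' (p c')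
          rw [hd, hbf] at hh
          simp at hh
          omega
      · by_cases hb : p c' = true
        · rw [hb] at hd
          refine ⟨c', hc', hb, ?_⟩
          have h' : evenDiag c' = (y, x) := by simpa [diagEnds] using hd
          rw [h', Sym2.eq_swap]
        · exfalso
          have hbf : p c' = false := by simpa using hb
          have hh := par_diagEnds_fst c' (p c')
          rw [hd, hbf] at hh
          simp at hh
          omega
  set ed : Cell n m → Sym2 (Vertex n m) := fun c' => s((evenDiag c').1, (evenDiag c').2)
    with hed
  have ed_inj : Function.Injective ed := by
    intro c₁ c₂ h
    have h' : s((diagEnds c₁ true).1, (diagEnds c₁ true).2)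
        = s((diagEnds c₂ true).1, (diagEnds c₂ true).2) := by
      simpa [diagEnds, hed] using h
    exact (diag_inj h').1
  set Cfin : Finset (Cell n m) := Finset.univ.filter (fun c' => ed c' ∈ W.edges) with hCfin
  have Cfin_mem : ∀ c' ∈ Cfin, c' ∈ D ∧ p c' = true := by
    intro c' hcf
    rw [hCfin, Finset.mem_filter] at hcf
    obtain ⟨c'', hD, hT, he⟩ := edge_char _ hcf.2
    cases ed_inj (show ed c' = ed c'' from he)
    exact ⟨hD, hT⟩
  have edges_eq : W.edges.toFinset = Cfin.image ed := by
    ext e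
    simp only [List.mem_toFinset, Finset.mem_image, hCfin, Finset.mem_filter,
      Finset.mem_univ, true_and]
    constructor
    · intro he
      obtain ⟨c', hD, hT, hee⟩ := edge_char e he
      refine ⟨c', ?_, hee.symm⟩
      show s((evenDiag c').1, (evenDiag c').2) ∈ W.edges
      rw [← hee]; exact he
    · rintro ⟨c', hmem, rfl⟩; exact hmem
  have count_eq : ∀ x : Vertex n m,
      W.edges.countP (fun e => x ∈ e) = (Cfin.filter (fun c' => x ∈ ed c')).card := by
    intro x
    have hnd : W.edges.Nodup := hWp.isTrail.edges_nodup
    have h1 : W.edges.countP (fun e => x ∈ e)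
        = (W.edges.toFinset.filter (fun e => x ∈ e)).card := by
      rw [List.countP_eq_length_filter, ← List.toFinset_card_of_nodup (hnd.filter _),
        List.toFinset_filter]
      congr 1
      ext e
      simp
    rw [h1, edges_eq, Finset.filter_image,
      Finset.card_image_of_injOn (Function.Injective.injOn ed_inj)]
  -- the finite set of integer cells
  set C : Finset (ℤ × ℤ) := insert (ζ c) (Cfin.image ζ) with hC
  have hzc_notmem : ζ c ∉ Cfin.image ζ := by
    intro hmem
    obtain ⟨c', hc', hzz⟩ := Finset.mem_image.mp hmem
    cases ζ_inj hzz
    exact hc (Cfin_mem _ hc').1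
  have hζc_mem : ζ c ∈ C := Finset.mem_insert_self _ _
  have Hdeg : ∀ a b : ℤ, (a + b) % 2 = 0 →
      ind C (a, b) + ind C (a-1, b-1) + ind C (a-1, b) + ind C (a, b-1) = 0 := by
    intro a b hab
    have h4 := four_ind C (a, b) (by simpa using hab)
    simp only at h4
    rw [h4]
    by_cases hrange : 0 ≤ a ∧ a ≤ (n : ℤ) ∧ 0 ≤ b ∧ b ≤ (m : ℤ)
    · -- real vertex
      obtain ⟨ha0, han, hb0, hbm⟩ := hrange
      set x : Vertex n m := (⟨a.toNat, by omega⟩, ⟨b.toNat, by omega⟩) with hx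
      have hιx : ι x = (a, b) := by
        simp only [ι, hx, Prod.ext_iff]
        constructor <;> simp <;> omega
      have hfilter : C.filter (fun z => touch z (a, b))
          = C.filter (fun z => touch z (ι x)) := by rw [hιx]
      rw [hfilter, hC, Finset.filter_insert]
      have himg : (Cfin.image ζ).filter (fun z => touch z (ι x))
          = (Cfin.filter (fun c' => x ∈ ed c')).image ζ := by
        rw [Finset.filter_image]
        congr 1
        apply Finset.filter_congr
        intro c' _
        simp only [touch_iff_mem, hed]
      have hcard2 : ((Cfin.image ζ).filter (fun z => touch z (ι x))).card
          = W.edges.countP (fun e => x ∈ e) := by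
        rw [himg, Finset.card_image_of_injOn (Function.Injective.injOn ζ_inj), count_eq]
      have heven := hWp.isTrail.even_countP_edges_iff x
      have htc : touch (ζ c) (ι x) ↔ (x = (evenDiag c).1 ∨ x = (evenDiag c).2) := by
        rw [touch_iff_mem c x, Sym2.mem_iff]
      by_cases hxc : touch (ζ c) (ι x)
      · rw [if_pos hxc]
        have hxuv := htc.mp hxc
        have hodd : ¬ Even (W.edges.countP (fun e => x ∈ e)) := by
          rw [heven]
          intro hcon
          rcases hxuv with h' | h'
          · exact (hcon huv).1 h'
          · exact (hcon huv).2 h'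
        rw [Finset.card_insert_of_notMem (by
          intro hmem
          exact hzc_notmem (Finset.mem_filter.mp hmem).1), hcard2,
          natCast_zmod2_eq, if_pos (Nat.even_add_one.mpr hodd)]
      · rw [if_neg hxc, hcard2]
        have hevenc : Even (W.edges.countP (fun e => x ∈ e)) := by
          rw [heven]
          intro _
          constructor
          · intro h'; exact hxc (htc.mpr (Or.inl h'))
          · intro h'; exact hxc (htc.mpr (Or.inr h'))
        rw [natCast_zmod2_eq, if_pos hevenc]
    · -- out of range: no touching cells
      rw [Finset.filter_false_of_mem, Finset.card_empty, Nat.cast_zero]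
      intro z hz htouch
      have hb := touch_bounds htouch
      simp only at hb
      have hzr : (0 ≤ z.1 ∧ z.1 + 1 ≤ (n:ℤ)) ∧ (0 ≤ z.2 ∧ z.2 + 1 ≤ (m:ℤ)) := by
        rw [hC, Finset.mem_insert] at hz
        rcases hz with rfl | hz
        · refine ⟨⟨?_, ?_⟩, ?_, ?_⟩ <;> simp [ζ] <;> omega
        · obtain ⟨c', -, rfl⟩ := Finset.mem_image.mp hz
          refine ⟨⟨?_, ?_⟩, ?_, ?_⟩ <;> simp [ζ] <;> omega
      omega
  -- the odd walk preserves the winding parity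
  have odd_step : ∀ c' : Cell n m, c' ∈ D → p c' = false →
      wInd C (ι (oddDiag c').1) = wInd C (ι (oddDiag c').2) := by
    intro c' hcD hbf
    have hnotC : ζ c' ∉ C := by
      rw [hC, Finset.mem_insert]
      rintro (hzz | hmem)
      · cases ζ_inj hzz; exact hc hcD
      · obtain ⟨c'', hcf, hzz⟩ := Finset.mem_image.mp hmem
        cases ζ_inj hzz
        rw [(Cfin_mem _ hcf).2] at hbf
        exact Bool.noConfusion hbf
    have hind0 : ind C (ζ c') = 0 := if_neg hnotC
    by_cases hpar : (c'.1.val + c'.2.val) % 2 = 0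
    · have hodd : oddDiag c' = (corner10 c', corner01 c') := by simp [oddDiag, hpar]
      rw [hodd]
      have hz2 : ((ζ c').1 + (ζ c').2) % 2 = 0 := by simp only [ζ]; omega
      have hcor := wInd_corner C Hdeg (ζ c').1 (ζ c').2 hz2
      rw [hind0] at hcor
      have := eq_of_add_eq_zero_zmod2 hcor
      simpa only [ι_corner10, ι_corner01] using this
    · have hodd : oddDiag c' = (corner00 c', corner11 c') := by simp [oddDiag, hpar]
      rw [hodd]
      have hstep := wInd_step C (ζ c').1 (ζ c').2
      rw [hind0, add_zero] at hstep
      rw [ι_corner00, ι_corner11, hstep]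
  have key : ∀ (x y : Vertex n m) (Q : G.Walk x y), par x = 1 →
      wInd C (ι x) = wInd C (ι y) := by
    intro x y Q
    induction Q with
    | nil => intro _; rfl
    | cons hadj q ih =>
      rename_i x' z' y'
      intro hpx
      have hpz : par z' = 1 := by rw [← adj_par hadj]; exact hpx
      have step : wInd C (ι x') = wInd C (ι z') := by
        rw [adj_iff] at hadj
        obtain ⟨hne, c', hcD, hd | hd⟩ := hadj
        · have hbf : p c' = false := by
            by_contra hb
            have hb' : p c' = true := by simpa using hb
            have hh := par_diagEnds_fst c' (p c')
            rw [hd, hb'] at hh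
            simp at hh
            omega
          have hOD : oddDiag c' = (x', z') := by
            rw [← hd]; simp [diagEnds, hbf]
          have := odd_step c' hcD hbf
          rw [hOD] at this
          exact this
        · have hbf : p c' = false := by
            by_contra hb
            have hb' : p c' = true := by simpa using hb
            have hh := par_diagEnds_snd c' (p c')
            rw [hd, hb'] at hh
            simp at hh
            omega
          have hOD : oddDiag c' = (z', x') := by
            rw [← hd]; simp [diagEnds, hbf]
          have := odd_step c' hcD hbf
          rw [hOD] at this
          exact this.symm
      rw [step]
      exact ih hpz
  obtain ⟨w1⟩ := h1
  have hkey := key _ _ w1 hpar_odd1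
  have hindc : ind C (ζ c) = 1 := if_pos hζc_mem
  by_cases hpar : (c.1.val + c.2.val) % 2 = 0
  · have hodd : oddDiag c = (corner10 c, corner01 c) := by simp [oddDiag, hpar]
    rw [hodd] at hkey
    have hz2 : ((ζ c).1 + (ζ c).2) % 2 = 0 := by simp only [ζ]; omega
    have hcor := wInd_corner C Hdeg (ζ c).1 (ζ c).2 hz2
    rw [hindc] at hcor
    simp only [ι_corner10, ι_corner01] at hkey
    rw [hkey] at hcor
    have := two_mul_zmod (wInd C ((ζ c).1, (ζ c).2 + 1))
    rw [this] at hcor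
    exact absurd hcor.symm (by decide)
  · have hodd : oddDiag c = (corner00 c, corner11 c) := by simp [oddDiag, hpar]
    rw [hodd] at hkey
    have hstep := wInd_step C (ζ c).1 (ζ c).2
    rw [hindc] at hstep
    simp only [ι_corner00, ι_corner11] at hkey
    rw [← hkey] at hstep
    have : (1 : ZMod 2) = 0 := by linear_combination (-1 : ZMod 2) * hstep
    exact absurd this (by decide)

lemma DiagGraph_congr {D : Set (Cell n m)} {p q : Cell n m → Bool}
    (h : ∀ c ∈ D, p c = q c) : DiagGraph D p = DiagGraph D q := by
  unfold DiagGraph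
  congr 1
  ext u v
  constructor
  · rintro ⟨c', hc', hd⟩; exact ⟨c', hc', by rwa [← h c' hc']⟩
  · rintro ⟨c', hc', hd⟩; exact ⟨c', hc', by rwa [h c' hc']⟩

lemma DiagGraph_insert {D : Set (Cell n m)} {p : Cell n m → Bool} {c : Cell n m} :
    DiagGraph (insert c D) p
      = DiagGraph D p ⊔ SimpleGraph.edge (diagEnds c (p c)).1 (diagEnds c (p c)).2 := by
  ext u v
  simp only [DiagGraph, SimpleGraph.fromRel_adj, SimpleGraph.sup_adj, SimpleGraph.edge_adj,
    Set.mem_insert_iff]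
  constructor
  · rintro ⟨hne, ⟨c', rfl | hc', hd⟩ | ⟨c', rfl | hc', hd⟩⟩
    · exact Or.inr ⟨Or.inl ⟨by rw [hd], by rw [hd]⟩, hne⟩
    · exact Or.inl ⟨hne, Or.inl ⟨c', hc', hd⟩⟩
    · exact Or.inr ⟨Or.inr ⟨by rw [hd], by rw [hd]⟩, hne⟩
    · exact Or.inl ⟨hne, Or.inr ⟨c', hc', hd⟩⟩
  · rintro (⟨hne, ⟨c', hc', hd⟩ | ⟨c', hc', hd⟩⟩ | ⟨⟨h1, h2⟩ | ⟨h1, h2⟩, hne⟩)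
    · exact ⟨hne, Or.inl ⟨c', Or.inr hc', hd⟩⟩
    · exact ⟨hne, Or.inr ⟨c', Or.inr hc', hd⟩⟩
    · exact ⟨hne, Or.inl ⟨c, Or.inl rfl, by rw [h1, h2]⟩⟩
    · exact ⟨hne, Or.inr ⟨c, Or.inl rfl, by rw [h1, h2]⟩⟩

lemma acyclic_sup_edge {V : Type*} {G : SimpleGraph V} {x y : V}
    (hG : G.IsAcyclic) (hxy : x ≠ y) (hnr : ¬ G.Reachable x y) :
    (G ⊔ SimpleGraph.edge x y).IsAcyclic := by
  classical
  intro v cyc hcyc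
  by_cases he : s(x, y) ∈ cyc.edges
  · have hmain := (SimpleGraph.adj_and_reachable_delete_edges_iff_exists_cycle
      (G := G ⊔ SimpleGraph.edge x y) (v := x) (w := y)).mpr ⟨v, cyc, hcyc, he⟩
    have hle : (G ⊔ SimpleGraph.edge x y) \ SimpleGraph.fromEdgeSet {s(x, y)} ≤ G := by
      intro a b hab
      rcases hab with ⟨h1 | h1, h2⟩
      · exact h1
      · exfalso
        apply h2
        rw [SimpleGraph.edge_adj] at h1
        rw [SimpleGraph.fromEdgeSet_adj]
        refine ⟨?_, h1.2⟩
        rcases h1.1 with ⟨rfl, rfl⟩ | ⟨rfl, rfl⟩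
        · rfl
        · exact Sym2.eq_swap
    exact hnr (hmain.2.mono hle)
  · have hsub : ∀ e ∈ cyc.edges, e ∈ G.edgeSet := by
      intro e hee
      have hmem := cyc.edges_subset_edgeSet hee
      rw [SimpleGraph.edgeSet_sup] at hmem
      rcases hmem with h | h
      · exact h
      · exfalso
        rw [SimpleGraph.edge_edgeSet_of_ne hxy] at h
        rw [Set.mem_singleton_iff] at h
        rw [h] at hee
        exact he hee
    exact hG (cyc.transfer G hsub) (hcyc.transfer hsub)

lemma extend_step {D : Set (Cell n m)} {p : Cell n m → Bool} {c : Cell n m} (hc : c ∉ D)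
    (hp : (DiagGraph D p).IsAcyclic) :
    ∃ b : Bool, (DiagGraph (insert c D) (Function.update p c b)).IsAcyclic := by
  classical
  have hnb : ¬ ((DiagGraph D p).Reachable (evenDiag c).1 (evenDiag c).2) ∨
      ¬ ((DiagGraph D p).Reachable (oddDiag c).1 (oddDiag c).2) := by
    by_contra hcon
    push_neg at hcon
    exact no_both hc hcon.1 hcon.2
  have hagree : ∀ b : Bool, DiagGraph D (Function.update p c b) = DiagGraph D p :=
    fun b => DiagGraph_congr (fun c' hc' => Function.update_of_ne
      (by rintro rfl; exact hc hc') _ _)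
  rcases hnb with hnr | hnr
  · refine ⟨true, ?_⟩
    rw [DiagGraph_insert, hagree, Function.update_self]
    have hends : diagEnds c true = evenDiag c := by simp [diagEnds]
    rw [hends]
    exact acyclic_sup_edge hp (by have := diagEnds_ne c true; rwa [hends] at this) hnr
  · refine ⟨false, ?_⟩
    rw [DiagGraph_insert, hagree, Function.update_self]
    have hends : diagEnds c false = oddDiag c := by simp [diagEnds]
    rw [hends]
    exact acyclic_sup_edge hp (by have := diagEnds_ne c false; rwa [hends] at this) hnr


end Aux

/-- Every partial assignment with acyclic diagonal graph extends
to a full assignment with acyclic diagonal graph. -/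
theorem extend_partial_acyclic (n m : ℕ) (D : Set (Cell n m)) (p : Cell n m → Bool)
    (hp : (DiagGraph D p).IsAcyclic) :
    ∃ f : Cell n m → Bool, (∀ c ∈ D, f c = p c) ∧
      (DiagGraph (Set.univ : Set (Cell n m)) f).IsAcyclic := by
  classical
  have main : ∀ (k : ℕ) (D : Set (Cell n m)) (p : Cell n m → Bool),
      (Set.univ \ D).ncard ≤ k → (DiagGraph D p).IsAcyclic →
      ∃ f : Cell n m → Bool, (∀ c ∈ D, f c = p c) ∧
        (DiagGraph (Set.univ : Set (Cell n m)) f).IsAcyclic := by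
    intro k
    induction k with
    | zero =>
      intro D p hcard hac
      have hD : D = Set.univ := by
        have h0 : (Set.univ \ D).ncard = 0 := Nat.le_zero.mp hcard
        have hfin : (Set.univ \ D : Set (Cell n m)).Finite := Set.toFinite _
        have : (Set.univ \ D : Set (Cell n m)) = ∅ := by
          rwa [← Set.ncard_eq_zero hfin]
        rw [Set.diff_eq_empty] at this
        exact le_antisymm (Set.subset_univ _) this
      subst hD
      exact ⟨p, fun c _ => rfl, hac⟩
    | succ k ih =>
      intro D p hcard hac
      by_cases hD : D = Set.univ
      · subst hD
        exact ⟨p, fun c _ => rfl, hac⟩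
      · obtain ⟨c, hc⟩ : ∃ c, c ∉ D := by
          by_contra hcon
          push_neg at hcon
          exact hD (le_antisymm (Set.subset_univ _) (fun x _ => hcon x))
        obtain ⟨b, hb⟩ := extend_step hc hac
        have hlt : (Set.univ \ insert c D).ncard < (Set.univ \ D).ncard := by
          apply Set.ncard_lt_ncard
          · constructor
            · intro x hx
              exact ⟨trivial, fun hxd => hx.2 (Set.mem_insert_of_mem _ hxd)⟩
            · intro hsub
              have hcmem : c ∈ (Set.univ \ D : Set (Cell n m)) := ⟨trivial, hc⟩
              have := hsub hcmem
              exact this.2 (Set.mem_insert _ _)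
          · exact Set.toFinite _
        obtain ⟨f, hf1, hf2⟩ := ih (insert c D) (Function.update p c b) (by omega) hb
        refine ⟨f, ?_, hf2⟩
        intro c' hc'
        rw [hf1 c' (Set.mem_insert_of_mem _ hc'),
          Function.update_of_ne (by rintro rfl; exact hc hc') _ _]
  exact main (Set.univ \ D).ncard D p le_rfl hp


end Slant
end

section
/- Let p be a partial assignment on a set D of cells of an n×m Slant board whose diagonal graph G(p) is acyclic, and let c be a cell not in D. Then there exists a Boolean value b such that the partial assignment on D ∪ {c} extending p by assigning b to c has an acyclic diagonal graph; equivalently, at most one of the two diagonal choices for c creates a cycle. -/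
/-!
Slant boards.

An `n×m` Slant board has cells indexed by `Fin n × Fin m` and vertices indexed by
`Fin (n+1) × Fin (m+1)`.  The four corners of cell `(i,j)` are the vertices
`(i,j)`, `(i+1,j)`, `(i,j+1)`, `(i+1,j+1)`.  A full assignment is a function from
cells to `Bool`: `true` means the cell contains the diagonal joining its two
corners with even coordinate sums, `false` the other diagonal.
-/

namespace Slant

variable {n m : ℕ}

/-!
If both diagonals of the free cell `c` closed a cycle, `G(p)` would contain a path from `00` to
`11` and a path from `10` to `01` (the corners of `c`).  Diagonal edges preserve the parity of
`x + y`, so the two paths live on complementary vertex classes and can only meet where two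
diagonals cross, i.e. in the middle of a cell; such a cell would carry both of its diagonals.
Closing the first path by the diagonal `00 — 11` of `c` gives a closed curve, crossed exactly once
by the other diagonal `10 — 01` and never by an edge of the second path: counting crossings of
a ray mod 2 this is impossible (a discrete Jordan curve theorem).  After rotating by 45°, the
diagonals become axis-parallel steps of length 2 in `ℤ × ℤ`, where the count is elementary.
-/

def IsAxisStep (a b : ℤ × ℤ) : Prop :=
  (a.2 = b.2 ∧ (b.1 = a.1 + 2 ∨ a.1 = b.1 + 2)) ∨ (a.1 = b.1 ∧ (b.2 = a.2 + 2 ∨ a.2 = b.2 + 2))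

def HasMidpoint (M a b : ℤ × ℤ) : Prop := a.1 + b.1 = 2 * M.1 ∧ a.2 + b.2 = 2 * M.2

/-- `q` is a point of the lattice dual to `a + (2ℤ)²`. -/
def IsDual (a q : ℤ × ℤ) : Prop := a.1 % 2 ≠ q.1 % 2 ∧ a.2 % 2 ≠ q.2 % 2

def CrossesRayBelow (q a b : ℤ × ℤ) : Prop := a.2 = b.2 ∧ a.1 + b.1 = 2 * q.1 ∧ a.2 < q.2

instance (a b : ℤ × ℤ) : Decidable (IsAxisStep a b) := by unfold IsAxisStep; infer_instance
instance (M a b : ℤ × ℤ) : Decidable (HasMidpoint M a b) := by unfold HasMidpoint; infer_instance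
instance (q a b : ℤ × ℤ) : Decidable (CrossesRayBelow q a b) := by
  unfold CrossesRayBelow; infer_instance

abbrev Steps := List ((ℤ × ℤ) × (ℤ × ℤ))

def rayCrossings (L : Steps) (q : ℤ × ℤ) : ℕ := L.countP fun s => CrossesRayBelow q s.1 s.2

def midpointCount (L : Steps) (M : ℤ × ℤ) : ℕ := L.countP fun s => HasMidpoint M s.1 s.2

lemma IsAxisStep.symm {a b : ℤ × ℤ} (h : IsAxisStep a b) : IsAxisStep b a := by
  unfold IsAxisStep at *; omega

lemma HasMidpoint.symm {M a b : ℤ × ℤ} (h : HasMidpoint M a b) : HasMidpoint M b a := by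
  unfold HasMidpoint at *; omega

lemma IsDual.of_isAxisStep {s a b : ℤ × ℤ} (h : IsDual s a) (hab : IsAxisStep a b) :
    IsDual s b := by
  unfold IsDual IsAxisStep at *; omega

lemma crossesRayBelow_add_right_mod_two {q : ℤ × ℤ} {s : (ℤ × ℤ) × (ℤ × ℤ)}
    (hs : IsAxisStep s.1 s.2) (hd : IsDual s.1 q) :
    ((if CrossesRayBelow q s.1 s.2 then 1 else 0) +
      (if CrossesRayBelow (q.1 + 2, q.2) s.1 s.2 then 1 else 0) +
      (if HasMidpoint (q.1 + 1, q.2) s.1 s.2 then 1 else 0) +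
      (if s.1.1 = q.1 + 1 ∧ s.1.2 < q.2 then 1 else 0) +
      (if s.2.1 = q.1 + 1 ∧ s.2.2 < q.2 then 1 else 0)) % 2 = 0 := by
  unfold IsAxisStep at hs
  unfold IsDual at hd
  split_ifs <;> simp only [CrossesRayBelow, HasMidpoint] at * <;> omega

/-- Each step meets the boundary of the half-strip below `[q, (q.1 + 2, q.2)]` an even number
of times once its endpoints inside the half-strip (the last two terms) are counted too. -/
lemma rayCrossings_add_right_add_vertices_mod_two {L : Steps} {q : ℤ × ℤ}
    (hL : ∀ s ∈ L, IsAxisStep s.1 s.2 ∧ IsDual s.1 q) :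
    (rayCrossings L q + rayCrossings L (q.1 + 2, q.2) + midpointCount L (q.1 + 1, q.2) +
      (L.map Prod.fst).countP (fun r => r.1 = q.1 + 1 ∧ r.2 < q.2) +
      (L.map Prod.snd).countP (fun r => r.1 = q.1 + 1 ∧ r.2 < q.2)) % 2 = 0 := by
  induction L with
  | nil => simp [rayCrossings, midpointCount]
  | cons s L ih =>
    have hrest := ih fun t ht => hL t (.tail _ ht)
    have hs := crossesRayBelow_add_right_mod_two (hL s (.head _)).1 (hL s (.head _)).2
    simp only [rayCrossings, midpointCount, List.countP_cons, List.map_cons,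
      decide_eq_true_eq] at hrest ⊢
    omega

lemma rayCrossings_add_right_mod_two {L : Steps} {q : ℤ × ℤ}
    (hclosed : (L.map Prod.fst).Perm (L.map Prod.snd))
    (hL : ∀ s ∈ L, IsAxisStep s.1 s.2 ∧ IsDual s.1 q) :
    (rayCrossings L q + rayCrossings L (q.1 + 2, q.2) + midpointCount L (q.1 + 1, q.2)) % 2 = 0 := by
  have h := rayCrossings_add_right_add_vertices_mod_two hL
  rw [hclosed.countP_eq] at h
  omega

lemma crossesRayBelow_add_down_mod_two {q : ℤ × ℤ} {s : (ℤ × ℤ) × (ℤ × ℤ)}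
    (hs : IsAxisStep s.1 s.2) (hd : IsDual s.1 q) :
    ((if CrossesRayBelow q s.1 s.2 then 1 else 0) +
      (if CrossesRayBelow (q.1, q.2 - 2) s.1 s.2 then 1 else 0) +
      (if HasMidpoint (q.1, q.2 - 1) s.1 s.2 then 1 else 0)) % 2 = 0 := by
  unfold IsAxisStep at hs
  unfold IsDual at hd
  split_ifs <;> simp only [CrossesRayBelow, HasMidpoint] at * <;> omega

lemma rayCrossings_add_down_mod_two {L : Steps} {q : ℤ × ℤ}
    (hL : ∀ s ∈ L, IsAxisStep s.1 s.2 ∧ IsDual s.1 q) :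
    (rayCrossings L q + rayCrossings L (q.1, q.2 - 2) + midpointCount L (q.1, q.2 - 1)) % 2 = 0 := by
  induction L with
  | nil => simp [rayCrossings, midpointCount]
  | cons s L ih =>
    have hrest := ih fun t ht => hL t (.tail _ ht)
    have hs := crossesRayBelow_add_down_mod_two (hL s (.head _)).1 (hL s (.head _)).2
    simp only [rayCrossings, midpointCount, List.countP_cons, decide_eq_true_eq] at hrest ⊢
    omega

theorem rayCrossings_add_rayCrossings_add_midpointCount_mod_two {L : Steps} {a b M : ℤ × ℤ}
    (hclosed : (L.map Prod.fst).Perm (L.map Prod.snd))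
    (hL : ∀ s ∈ L, IsAxisStep s.1 s.2 ∧ IsDual s.1 a) (hab : IsAxisStep a b)
    (hM : HasMidpoint M a b) :
    (rayCrossings L a + rayCrossings L b + midpointCount L M) % 2 = 0 := by
  have hL' : ∀ s ∈ L, IsAxisStep s.1 s.2 ∧ IsDual s.1 b :=
    fun s hs => ⟨(hL s hs).1, (hL s hs).2.of_isAxisStep hab⟩
  obtain ⟨hM₁, hM₂⟩ := hM
  obtain ⟨h₂, h₁ | h₁⟩ | ⟨h₁, h₂ | h₂⟩ := hab
  · obtain rfl : b = (a.1 + 2, a.2) := Prod.ext h₁ h₂.symm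
    obtain rfl : M = (a.1 + 1, a.2) := Prod.ext (by omega) (by omega)
    exact rayCrossings_add_right_mod_two hclosed hL
  · obtain rfl : a = (b.1 + 2, b.2) := Prod.ext h₁ h₂
    obtain rfl : M = (b.1 + 1, b.2) := Prod.ext (by omega) (by omega)
    have := rayCrossings_add_right_mod_two hclosed hL'
    omega
  · obtain rfl : a = (b.1, b.2 - 2) := Prod.ext h₁ (by omega)
    obtain rfl : M = (b.1, b.2 - 1) := Prod.ext (by omega) (by omega)
    have := rayCrossings_add_down_mod_two hL'
    omega
  · obtain rfl : b = (a.1, a.2 - 2) := Prod.ext h₁.symm (by omega)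
    obtain rfl : M = (a.1, a.2 - 1) := Prod.ext (by omega) (by omega)
    exact rayCrossings_add_down_mod_two hL

/-- Rotation by 45° (and scaling by `√2`), which makes the diagonals of the board
axis-parallel steps of length `2`. -/
def rot (v : Vertex n m) : ℤ × ℤ := ((v.1.val : ℤ) + v.2.val, (v.1.val : ℤ) - v.2.val)

/-- The image under `rot` of the centre of a cell. -/
def center (c : Cell n m) : ℤ × ℤ := ((c.1.val : ℤ) + c.2.val + 1, (c.1.val : ℤ) - c.2.val)

def parity (v : Vertex n m) : ℕ := (v.1.val + v.2.val) % 2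

lemma rot_corner00 (c : Cell n m) :
    rot (corner00 c) = ((c.1.val : ℤ) + c.2.val, (c.1.val : ℤ) - c.2.val) := by
  simp [rot, corner00]

lemma rot_corner11 (c : Cell n m) :
    rot (corner11 c) = ((c.1.val : ℤ) + c.2.val + 2, (c.1.val : ℤ) - c.2.val) := by
  simp only [rot, corner11, Fin.val_succ, Prod.mk.injEq]; push_cast; constructor <;> ring

lemma rot_corner10 (c : Cell n m) :
    rot (corner10 c) = ((c.1.val : ℤ) + c.2.val + 1, (c.1.val : ℤ) - c.2.val + 1) := by
  simp only [rot, corner10, Fin.val_succ, Fin.val_castSucc, Prod.mk.injEq]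
  push_cast; constructor <;> ring

lemma rot_corner01 (c : Cell n m) :
    rot (corner01 c) = ((c.1.val : ℤ) + c.2.val + 1, (c.1.val : ℤ) - c.2.val - 1) := by
  simp only [rot, corner01, Fin.val_succ, Fin.val_castSucc, Prod.mk.injEq]
  push_cast; constructor <;> ring

lemma isAxisStep_rot_corner00_corner11 (c : Cell n m) :
    IsAxisStep (rot (corner00 c)) (rot (corner11 c)) := by
  rw [rot_corner00, rot_corner11]; unfold IsAxisStep; omega

lemma isAxisStep_rot_corner10_corner01 (c : Cell n m) :
    IsAxisStep (rot (corner10 c)) (rot (corner01 c)) := by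
  rw [rot_corner10, rot_corner01]; unfold IsAxisStep; omega

lemma hasMidpoint_center_corner00_corner11 (c : Cell n m) :
    HasMidpoint (center c) (rot (corner00 c)) (rot (corner11 c)) := by
  rw [rot_corner00, rot_corner11]; unfold HasMidpoint center; omega

lemma hasMidpoint_center_corner10_corner01 (c : Cell n m) :
    HasMidpoint (center c) (rot (corner10 c)) (rot (corner01 c)) := by
  rw [rot_corner10, rot_corner01]; unfold HasMidpoint center; omega

lemma parity_corner10_ne_parity_corner11 (c : Cell n m) :
    parity (corner10 c) ≠ parity (corner11 c) := by
  simp only [parity, corner10, corner11, Fin.val_succ, Fin.val_castSucc]; omega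

lemma eq_of_hasMidpoint_center {c c' : Cell n m} {a b : ℤ × ℤ} (h : HasMidpoint (center c) a b)
    (h' : HasMidpoint (center c') a b) : c = c' := by
  unfold HasMidpoint center at h h'
  exact Prod.ext (Fin.ext (by omega)) (Fin.ext (by omega))

lemma isDual_rot_iff {u v : Vertex n m} : IsDual (rot u) (rot v) ↔ parity u ≠ parity v := by
  unfold IsDual rot parity; omega

lemma parity_eq_of_isAxisStep_rot {u v : Vertex n m} (h : IsAxisStep (rot u) (rot v)) :
    parity u = parity v := by
  unfold IsAxisStep rot parity at *; omega

lemma diagEnds_true_false (c : Cell n m) :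
    diagEnds c true = (corner00 c, corner11 c) ∧ diagEnds c false = (corner10 c, corner01 c) ∨
    diagEnds c true = (corner10 c, corner01 c) ∧ diagEnds c false = (corner00 c, corner11 c) := by
  simp only [diagEnds, evenDiag, oddDiag, if_true, Bool.false_eq_true, if_false]
  split_ifs <;> simp

lemma isAxisStep_rot_diagEnds (c : Cell n m) (b : Bool) :
    IsAxisStep (rot (diagEnds c b).1) (rot (diagEnds c b).2) := by
  cases b <;> rcases diagEnds_true_false c with ⟨h₁, h₂⟩ | ⟨h₁, h₂⟩ <;>
    simp only [h₁, h₂, isAxisStep_rot_corner00_corner11, isAxisStep_rot_corner10_corner01]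

lemma hasMidpoint_center_diagEnds (c : Cell n m) (b : Bool) :
    HasMidpoint (center c) (rot (diagEnds c b).1) (rot (diagEnds c b).2) := by
  cases b <;> rcases diagEnds_true_false c with ⟨h₁, h₂⟩ | ⟨h₁, h₂⟩ <;>
    simp only [h₁, h₂, hasMidpoint_center_corner00_corner11, hasMidpoint_center_corner10_corner01]

section DiagGraph

variable {D : Set (Cell n m)} {p : Cell n m → Bool}

lemma exists_cell_of_adj {u v : Vertex n m} (h : (DiagGraph D p).Adj u v) :
    ∃ c ∈ D, IsAxisStep (rot u) (rot v) ∧ HasMidpoint (center c) (rot u) (rot v) ∧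
      ((diagEnds c (p c)).1 = u ∨ (diagEnds c (p c)).1 = v) := by
  rw [DiagGraph, SimpleGraph.fromRel_adj] at h
  obtain ⟨-, ⟨c, hc, he⟩ | ⟨c, hc, he⟩⟩ := h
  · have hs := isAxisStep_rot_diagEnds c (p c)
    have hm := hasMidpoint_center_diagEnds c (p c)
    rw [he] at hs hm
    exact ⟨c, hc, hs, hm, .inl (by rw [he])⟩
  · have hs := isAxisStep_rot_diagEnds c (p c)
    have hm := hasMidpoint_center_diagEnds c (p c)
    rw [he] at hs hm
    exact ⟨c, hc, hs.symm, hm.symm, .inr (by rw [he])⟩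

lemma isAxisStep_rot_of_adj {u v : Vertex n m} (h : (DiagGraph D p).Adj u v) :
    IsAxisStep (rot u) (rot v) := by
  obtain ⟨-, -, hs, -⟩ := exists_cell_of_adj h
  exact hs

lemma parity_eq_of_adj {u v : Vertex n m} (h : (DiagGraph D p).Adj u v) : parity u = parity v :=
  parity_eq_of_isAxisStep_rot (isAxisStep_rot_of_adj h)

lemma parity_eq_of_mem_support {u v x : Vertex n m} (W : (DiagGraph D p).Walk u v)
    (hx : x ∈ W.support) : parity x = parity u := by
  induction W with
  | nil => rw [SimpleGraph.Walk.support_nil, List.mem_singleton] at hx; rw [hx]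
  | cons h W ih =>
    rcases List.mem_cons.mp hx with rfl | hx
    · rfl
    · rw [ih hx, parity_eq_of_adj h]

def closedCurve {G : SimpleGraph (Vertex n m)} {u v : Vertex n m} (W : G.Walk u v) : Steps :=
  W.darts.map (fun d => (rot d.fst, rot d.snd)) ++ [(rot v, rot u)]

lemma closedCurve_perm {G : SimpleGraph (Vertex n m)} {u v : Vertex n m} (W : G.Walk u v) :
    ((closedCurve W).map Prod.fst).Perm ((closedCurve W).map Prod.snd) := by
  have hfst : (closedCurve W).map Prod.fst = W.support.map rot := by
    rw [← W.map_fst_darts_append]; simp [closedCurve]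
  have hsnd : (closedCurve W).map Prod.snd = W.support.tail.map rot ++ [rot u] := by
    rw [← W.map_snd_darts]; simp [closedCurve]
  rw [hfst, hsnd, ← W.cons_tail_support, List.map_cons]
  exact (List.perm_append_singleton _ _).symm

lemma closedCurve_steps {u v q : Vertex n m} (W : (DiagGraph D p).Walk u v)
    (hvu : IsAxisStep (rot v) (rot u)) (hq : parity q ≠ parity u) :
    ∀ s ∈ closedCurve W, IsAxisStep s.1 s.2 ∧ IsDual s.1 (rot q) := by
  intro s hs
  simp only [closedCurve, List.mem_append, List.mem_map, List.mem_singleton] at hs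
  rcases hs with ⟨d, hd, rfl⟩ | rfl
  · refine ⟨isAxisStep_rot_of_adj d.adj, isDual_rot_iff.2 ?_⟩
    rw [parity_eq_of_mem_support W (W.dart_fst_mem_support_of_mem_darts hd)]
    exact hq.symm
  · refine ⟨hvu, isDual_rot_iff.2 ?_⟩
    rw [parity_eq_of_mem_support W W.end_mem_support]
    exact hq.symm

/-- Each cell carries one diagonal, so the only edge through the centre of a cell lies on the
vertex class of that diagonal. -/
lemma not_hasMidpoint_center_of_mem_darts {u v : Vertex n m} {c : Cell n m}
    (W : (DiagGraph D p).Walk u v) (hc : c ∈ D → parity (diagEnds c (p c)).1 ≠ parity u)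
    {d : (DiagGraph D p).Dart} (hd : d ∈ W.darts) :
    ¬ HasMidpoint (center c) (rot d.fst) (rot d.snd) := by
  intro hm
  obtain ⟨c', hc', -, hm', hends⟩ := exists_cell_of_adj d.adj
  obtain rfl := eq_of_hasMidpoint_center hm' hm
  have hfst := parity_eq_of_mem_support W (W.dart_fst_mem_support_of_mem_darts hd)
  have hsnd := parity_eq_of_mem_support W (W.dart_snd_mem_support_of_mem_darts hd)
  rcases hends with h | h <;> rw [h] at hc
  exacts [hc hc' hfst, hc hc' hsnd]

lemma midpointCount_closedCurve_center {u v : Vertex n m} {c : Cell n m}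
    (W : (DiagGraph D p).Walk u v) (hc : c ∈ D → parity (diagEnds c (p c)).1 ≠ parity u) :
    midpointCount (closedCurve W) (center c) =
      if HasMidpoint (center c) (rot v) (rot u) then 1 else 0 := by
  rw [midpointCount, closedCurve, List.countP_append, List.countP_map, List.countP_eq_zero.2]
  · simp
  · intro d hd
    simpa using not_hasMidpoint_center_of_mem_darts W hc hd

lemma rayCrossings_closedCurve_mod_two_eq_of_adj {u v a b : Vertex n m}
    (W : (DiagGraph D p).Walk u v) (hvu : IsAxisStep (rot v) (rot u))
    (hmid : ∀ c ∈ D, ¬ HasMidpoint (center c) (rot v) (rot u))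
    (hab : (DiagGraph D p).Adj a b) (ha : parity a ≠ parity u) :
    rayCrossings (closedCurve W) (rot a) % 2 = rayCrossings (closedCurve W) (rot b) % 2 := by
  obtain ⟨c, hc, hstep, hm, hends⟩ := exists_cell_of_adj hab
  have hzero : midpointCount (closedCurve W) (center c) = 0 := by
    rw [midpointCount_closedCurve_center W, if_neg (hmid c hc)]
    rcases hends with h | h <;> rw [h]
    · exact fun _ => ha
    · exact fun _ => parity_eq_of_adj hab ▸ ha
  have := rayCrossings_add_rayCrossings_add_midpointCount_mod_two (closedCurve_perm W)
    (closedCurve_steps W hvu ha) hstep hm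
  omega

lemma rayCrossings_closedCurve_mod_two_eq_of_walk {u v x y : Vertex n m}
    (W : (DiagGraph D p).Walk u v) (hvu : IsAxisStep (rot v) (rot u))
    (hmid : ∀ c ∈ D, ¬ HasMidpoint (center c) (rot v) (rot u))
    (W' : (DiagGraph D p).Walk x y) (hx : parity x ≠ parity u) :
    rayCrossings (closedCurve W) (rot x) % 2 = rayCrossings (closedCurve W) (rot y) % 2 := by
  induction W' with
  | nil => rfl
  | cons hab W' ih =>
    rw [rayCrossings_closedCurve_mod_two_eq_of_adj W hvu hmid hab hx,
      ih (parity_eq_of_adj hab ▸ hx)]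

theorem not_reachable_corner10_corner01 {c : Cell n m} (hc : c ∉ D)
    (h : (DiagGraph D p).Reachable (corner00 c) (corner11 c)) :
    ¬ (DiagGraph D p).Reachable (corner10 c) (corner01 c) := by
  obtain ⟨W⟩ := h.symm
  rintro ⟨W'⟩
  have hvu := isAxisStep_rot_corner00_corner11 c
  have hmid := hasMidpoint_center_corner00_corner11 c
  have hpar := parity_corner10_ne_parity_corner11 c
  have hW' := rayCrossings_closedCurve_mod_two_eq_of_walk W hvu
    (fun c' hc' h => hc (eq_of_hasMidpoint_center h hmid ▸ hc')) W' hpar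
  have hone : midpointCount (closedCurve W) (center c) = 1 := by
    rw [midpointCount_closedCurve_center W (absurd · hc), if_pos hmid]
  have := rayCrossings_add_rayCrossings_add_midpointCount_mod_two (closedCurve_perm W)
    (closedCurve_steps W hvu hpar) (isAxisStep_rot_corner10_corner01 c)
    (hasMidpoint_center_corner10_corner01 c)
  omega

end DiagGraph

lemma diagGraph_insert_update_le (D : Set (Cell n m)) (p : Cell n m → Bool) (c : Cell n m)
    (b : Bool) : DiagGraph (insert c D) (Function.update p c b) ≤
      DiagGraph D p ⊔ SimpleGraph.edge (diagEnds c b).1 (diagEnds c b).2 := by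
  intro u v h
  rw [DiagGraph, SimpleGraph.fromRel_adj] at h
  obtain ⟨hne, h⟩ := h
  rw [SimpleGraph.sup_adj, SimpleGraph.edge_adj, DiagGraph, SimpleGraph.fromRel_adj]
  rcases h with ⟨c', hc', he⟩ | ⟨c', hc', he⟩ <;> rw [Function.update_apply] at he <;>
    split_ifs at he with hcc
  · subst hcc; exact .inr ⟨.inl ⟨by rw [he], by rw [he]⟩, hne⟩
  · exact .inl ⟨hne, .inl ⟨c', (Set.mem_insert_iff.1 hc').resolve_left hcc, he⟩⟩
  · subst hcc; exact .inr ⟨.inr ⟨by rw [he], by rw [he]⟩, hne⟩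
  · exact .inl ⟨hne, .inr ⟨c', (Set.mem_insert_iff.1 hc').resolve_left hcc, he⟩⟩

/-- A partial assignment with acyclic diagonal graph can always be
extended by one more cell without creating a cycle: at most one of the two diagonal
choices creates a cycle. -/
theorem extend_one_cell_acyclic (n m : ℕ) (D : Set (Cell n m)) (p : Cell n m → Bool)
    (hp : (DiagGraph D p).IsAcyclic) (c : Cell n m) (hc : c ∉ D) :
    ∃ b : Bool, (DiagGraph (insert c D) (Function.update p c b)).IsAcyclic := by
  by_contra! h
  have hreach (b : Bool) : (DiagGraph D p).Reachable (diagEnds c b).1 (diagEnds c b).2 := by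
    by_contra hb
    exact h b ((hp.sup_edge_of_not_reachable hb).anti (diagGraph_insert_update_le D p c b))
  rcases diagEnds_true_false c with ⟨ht, hf⟩ | ⟨ht, hf⟩
  · exact not_reachable_corner10_corner01 hc (by simpa [ht] using hreach true)
      (by simpa [hf] using hreach false)
  · exact not_reachable_corner10_corner01 hc (by simpa [hf] using hreach false)
      (by simpa [ht] using hreach true)

end Slant
end

section
/- For every n and m, there exists a full assignment f on the n×m Slant board whose diagonal graph G(f) is acyclic; that is, every Slant board with no vertex constraints has a valid solution. -/
/-! Put in every cell the diagonal from `(i+1, j)` to `(i, j+1)`. Each edge then stays on an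
antidiagonal `x + y = const` and changes `x` by one, so every vertex has at most one neighbour
with smaller `x`; a graph ranked this way contains no cycle, since at a vertex of maximal rank on a
cycle both cycle-neighbours would lie below it. -/

theorem SimpleGraph.isAcyclic_of_unique_lower_neighbor {V α : Type*} [LinearOrder α]
    {G : SimpleGraph V} (φ : V → α) (hne : ∀ ⦃u v⦄, G.Adj u v → φ u ≠ φ v)
    (hlower : ∀ ⦃u v w⦄, G.Adj u v → G.Adj u w → φ v < φ u → φ w < φ u → v = w) :
    G.IsAcyclic := by
  classical
  intro v c hc
  obtain ⟨u, hu, hmax⟩ := c.support.toFinset.exists_max_image φ ⟨v, by simp⟩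
  rw [List.mem_toFinset] at hu
  set p := c.rotate u hu
  have hp : p.IsCycle := hc.rotate hu
  have below : ∀ w, G.Adj u w → w ∈ p.support → φ w < φ u := fun w hadj hw =>
    lt_of_le_of_ne (hmax w (by simpa [p] using hw)) (hne hadj).symm
  have hsnd := p.adj_snd hp.not_nil
  have hpen := (p.adj_penultimate hp.not_nil).symm
  exact hp.snd_ne_penultimate (hlower hsnd hpen
    (below _ hsnd (p.getVert_mem_support _)) (below _ hpen (p.getVert_mem_support _)))

namespace Slant

variable {n m : ℕ}

/-- Every cell gets the diagonal joining its corners `(i+1, j)` and `(i, j+1)`. -/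
def antidiagAssignment (c : Cell n m) : Bool := decide ((c.1.val + c.2.val) % 2 = 1)

lemma diagEnds_antidiagAssignment (c : Cell n m) :
    diagEnds c (antidiagAssignment c) = (corner10 c, corner01 c) := by
  rcases Nat.mod_two_eq_zero_or_one (c.1.val + c.2.val) with h | h <;>
    simp [antidiagAssignment, diagEnds, evenDiag, oddDiag, h]

lemma adj_antidiagAssignment {D : Set (Cell n m)} {u v : Vertex n m}
    (h : (DiagGraph D antidiagAssignment).Adj u v) :
    u.1.val + u.2.val = v.1.val + v.2.val ∧ (u.1.val = v.1.val + 1 ∨ v.1.val = u.1.val + 1) := by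
  obtain ⟨-, ⟨c, -, hc⟩ | ⟨c, -, hc⟩⟩ := h <;>
    simp only [diagEnds_antidiagAssignment, Prod.mk.injEq] at hc <;>
    obtain ⟨rfl, rfl⟩ := hc <;>
    simp only [corner10, corner01, Fin.val_succ, Fin.val_castSucc] <;> grind

/-- Every Slant board with no vertex constraints has a valid solution:
there is a full assignment whose diagonal graph is acyclic. -/
theorem exists_acyclic_assignment (n m : ℕ) :
    ∃ f : Cell n m → Bool, (DiagGraph (Set.univ : Set (Cell n m)) f).IsAcyclic := by
  refine ⟨antidiagAssignment, SimpleGraph.isAcyclic_of_unique_lower_neighbor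
    (fun v : Vertex n m => v.1.val) (fun u v huv => ?_) (fun u v w huv huw hv hw => ?_)⟩
  · have := adj_antidiagAssignment huv
    omega
  · have := adj_antidiagAssignment huv
    have := adj_antidiagAssignment huw
    ext <;> omega

end Slant
end

section
/- Let f be a full assignment on an n×m Slant board (n, m ≥ 1) whose diagonal graph G(f) is acyclic. Then every connected component of G(f) contains a boundary vertex, i.e. a vertex (x,y) with x = 0, x = n, y = 0, or y = m. Equivalently, every vertex of the board is connected in G(f) to some boundary vertex. -/
/-!
Slant boards.

An `n×m` Slant board has cells indexed by `Fin n × Fin m` and vertices indexed by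
`Fin (n+1) × Fin (m+1)`.  The four corners of cell `(i,j)` are the vertices
`(i,j)`, `(i+1,j)`, `(i,j+1)`, `(i+1,j+1)`.  A full assignment is a function from
cells to `Bool`: `true` means the cell contains the diagonal joining its two
corners with even coordinate sums, `false` the other diagonal.
-/

namespace Slant

variable {n m : ℕ}

/-! ### Auxiliary machinery: potentials on acyclic graphs -/

section Potential

open SimpleGraph

variable {V : Type*} {G : SimpleGraph V}

/-- Sum of an antisymmetric edge weight along a walk. -/
def wsum (σ : V → V → ℤ) {u v : V} (p : G.Walk u v) : ℤ :=
  (p.darts.map fun d => σ d.toProd.1 d.toProd.2).sum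

lemma wsum_nil (σ : V → V → ℤ) (u : V) : wsum σ (Walk.nil : G.Walk u u) = 0 := rfl

lemma wsum_cons (σ : V → V → ℤ) {u b v : V} (h : G.Adj u b) (p : G.Walk b v) :
    wsum σ (Walk.cons h p) = σ u b + wsum σ p := by
  simp [wsum, Walk.darts_cons]

lemma wsum_append (σ : V → V → ℤ) {u b v : V} (p : G.Walk u b) (q : G.Walk b v) :
    wsum σ (p.append q) = wsum σ p + wsum σ q := by
  simp [wsum, Walk.darts_append]

lemma wsum_copy (σ : V → V → ℤ) {u v u' v' : V} (p : G.Walk u v) (hu : u = u') (hv : v = v') :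
    wsum σ (p.copy hu hv) = wsum σ p := by subst hu; subst hv; rfl

lemma wsum_bypass [DecidableEq V] (hG : G.IsAcyclic) (σ : V → V → ℤ)
    (hσ : ∀ u v, G.Adj u v → σ u v = -σ v u) :
    ∀ {u v : V} (p : G.Walk u v), wsum σ p.bypass = wsum σ p := by
  intro u v p
  induction p with
  | nil => rfl
  | @cons u b v h p ih =>
    simp only [Walk.bypass]
    split_ifs with hs
    · have hp' := Walk.take_spec p.bypass hs
      have htp : (p.bypass.takeUntil u hs).IsPath := p.bypass_isPath.takeUntil hs
      have hsingle : p.bypass.takeUntil u hs = Walk.cons h.symm Walk.nil := by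
        have huniq := SimpleGraph.isAcyclic_iff_path_unique.mp hG ⟨_, htp⟩ (Path.singleton h.symm)
        simpa [Path.singleton] using congrArg Subtype.val huniq
      have hws := congrArg (wsum σ) hp'
      rw [wsum_append, hsingle, wsum_cons, wsum_nil, ih] at hws
      rw [wsum_cons, ← hws, hσ u b h]
      ring
    · rw [wsum_cons, wsum_cons, ih]

lemma wsum_eq [DecidableEq V] (hG : G.IsAcyclic) (σ : V → V → ℤ)
    (hσ : ∀ u v, G.Adj u v → σ u v = -σ v u) {u v : V} (p q : G.Walk u v) :
    wsum σ p = wsum σ q := by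
  rw [← wsum_bypass hG σ hσ p, ← wsum_bypass hG σ hσ q]
  have huniq := SimpleGraph.isAcyclic_iff_path_unique.mp hG
    ⟨_, p.bypass_isPath⟩ ⟨_, q.bypass_isPath⟩
  rw [show p.bypass = q.bypass from congrArg Subtype.val huniq]

lemma exists_potential (hG : G.IsAcyclic) (σ : V → V → ℤ)
    (hσ : ∀ u v, G.Adj u v → σ u v = -σ v u) :
    ∃ φ : V → ℤ, ∀ u v, G.Adj u v → φ v - φ u = σ u v := by
  classical
  have hre : ∀ w : V, G.Reachable (Quot.out (G.connectedComponentMk w)) w := by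
    intro w
    exact SimpleGraph.ConnectedComponent.exact (Quot.out_eq (G.connectedComponentMk w))
  refine ⟨fun w => wsum σ (hre w).some, ?_⟩
  intro a b hab
  have hc : G.connectedComponentMk a = G.connectedComponentMk b :=
    SimpleGraph.ConnectedComponent.sound hab.reachable
  have e : Quot.out (G.connectedComponentMk b) = Quot.out (G.connectedComponentMk a) := by
    rw [hc]
  have h1 : wsum σ ((hre b).some) = wsum σ (((hre b).some).copy e rfl) :=
    (wsum_copy σ _ e rfl).symm
  have h2 : wsum σ (((hre b).some).copy e rfl) =
      wsum σ ((hre a).some.append (Walk.cons hab Walk.nil)) := wsum_eq hG σ hσ _ _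
  simp only [h1, h2, wsum_append, wsum_cons, wsum_nil]
  ring

end Potential

open SimpleGraph

/-! ### Coordinates, the curl weight `gam`, and its divergence -/

def coordsZ (u : Vertex n m) : ℤ × ℤ := ((u.1.val : ℤ), (u.2.val : ℤ))

lemma coordsZ_injective : Function.Injective (coordsZ (n := n) (m := m)) := by
  rintro ⟨a1, a2⟩ ⟨b1, b2⟩ h
  simp only [coordsZ, Prod.mk.injEq, Int.natCast_inj] at h
  simp [Prod.ext_iff, Fin.ext_iff, h.1, h.2]

def D4 : Finset (ℤ × ℤ) := {(1,1), (1,-1), (-1,1), (-1,-1)}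

/-- The "curl" of the indicator `χ` : antisymmetric weight on diagonal segments. -/
def gam (χ : ℤ × ℤ → ℤ) (a b : ℤ × ℤ) : ℤ :=
  (b.1 - a.1) * (b.2 - a.2) * (χ (a.1, b.2) - χ (b.1, a.2))

lemma gam_antisymm (χ : ℤ × ℤ → ℤ) (a b : ℤ × ℤ) : gam χ a b = - gam χ b a := by
  unfold gam; ring

section Board

variable (f : Cell n m → Bool)

lemma diag_cases (c : Cell n m) :
    diagEnds c (f c) = (corner00 c, corner11 c) ∨
      diagEnds c (f c) = (corner10 c, corner01 c) := by
  unfold diagEnds evenDiag oddDiag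
  cases f c <;> split_ifs <;> simp

lemma adj_of_ends {c : Cell n m} {u w : Vertex n m} (h : diagEnds c (f c) = (u, w))
    (hne : u ≠ w) : (DiagGraph Set.univ f).Adj u w := by
  unfold DiagGraph
  rw [SimpleGraph.fromRel_adj]
  exact ⟨hne, Or.inl ⟨c, Set.mem_univ c, h⟩⟩

lemma coordsZ_corner00 (c : Cell n m) :
    coordsZ (corner00 c) = ((c.1.val : ℤ), (c.2.val : ℤ)) := by
  simp [coordsZ, corner00]

lemma coordsZ_corner10 (c : Cell n m) :
    coordsZ (corner10 c) = ((c.1.val : ℤ) + 1, (c.2.val : ℤ)) := by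
  simp [coordsZ, corner10, Fin.val_succ]

lemma coordsZ_corner01 (c : Cell n m) :
    coordsZ (corner01 c) = ((c.1.val : ℤ), (c.2.val : ℤ) + 1) := by
  simp [coordsZ, corner01, Fin.val_succ]

lemma coordsZ_corner11 (c : Cell n m) :
    coordsZ (corner11 c) = ((c.1.val : ℤ) + 1, (c.2.val : ℤ) + 1) := by
  simp [coordsZ, corner11, Fin.val_succ]

lemma ne_00_11 (c : Cell n m) : corner00 c ≠ corner11 c := by
  intro h
  have := congrArg (fun u : Vertex n m => u.1.val) h
  simp [corner00, corner11, Fin.val_succ] at this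

lemma ne_10_01 (c : Cell n m) : corner10 c ≠ corner01 c := by
  intro h
  have := congrArg (fun u : Vertex n m => u.1.val) h
  simp [corner10, corner01, Fin.val_succ] at this

def adjZ (a b : ℤ × ℤ) : Prop :=
  ∃ u w : Vertex n m, (DiagGraph Set.univ f).Adj u w ∧ coordsZ u = a ∧ coordsZ w = b

lemma adjZ_symm {a b : ℤ × ℤ} (h : adjZ f a b) : adjZ f b a := by
  obtain ⟨u, w, h1, h2, h3⟩ := h
  exact ⟨w, u, h1.symm, h3, h2⟩

lemma cell_adjZ (i j : ℕ) (hi : i < n) (hj : j < m) :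
    adjZ f ((i:ℤ), (j:ℤ)) ((i:ℤ)+1, (j:ℤ)+1) ∨ adjZ f ((i:ℤ)+1, (j:ℤ)) ((i:ℤ), (j:ℤ)+1) := by
  rcases diag_cases f (⟨i, hi⟩, ⟨j, hj⟩) with h | h
  · exact Or.inl ⟨_, _, adj_of_ends f h (ne_00_11 _), coordsZ_corner00 _, coordsZ_corner11 _⟩
  · exact Or.inr ⟨_, _, adj_of_ends f h (ne_10_01 _), coordsZ_corner10 _, coordsZ_corner01 _⟩

lemma adj_sub_mem {u w : Vertex n m} (h : (DiagGraph Set.univ f).Adj u w) :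
    coordsZ w - coordsZ u ∈ D4 := by
  have main : ∀ c : Cell n m, ∀ a b : Vertex n m, diagEnds c (f c) = (a, b) →
      coordsZ b - coordsZ a ∈ D4 ∧ coordsZ a - coordsZ b ∈ D4 := by
    intro c a b hc
    rcases diag_cases f c with h1 | h1 <;>
    · rw [hc] at h1
      simp only [Prod.mk.injEq] at h1
      obtain ⟨h2, h3⟩ := h1
      subst h2; subst h3
      constructor <;>
      · simp only [coordsZ_corner00, coordsZ_corner01, coordsZ_corner10, coordsZ_corner11,
          Prod.mk_sub_mk, D4, Finset.mem_insert, Finset.mem_singleton, Prod.mk.injEq]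
        omega
  have h' := h
  unfold DiagGraph at h'
  rw [SimpleGraph.fromRel_adj] at h'
  obtain ⟨-, hrel⟩ := h'
  rcases hrel with ⟨c, -, hc⟩ | ⟨c, -, hc⟩
  · exact (main c u w hc).1
  · exact (main c w u hc).2

end Board

end Slant

namespace Slant
section Chi

open SimpleGraph
variable {n m : ℕ} (f : Cell n m → Bool)

open Classical in
/-- Indicator (in `ℤ`) of the coordinates of vertices reachable from `v`. -/
noncomputable def chi (v : Vertex n m) (q : ℤ × ℤ) : ℤ :=
  if ∃ u : Vertex n m, (DiagGraph Set.univ f).Reachable v u ∧ coordsZ u = q then 1 else 0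

variable {v : Vertex n m}

lemma chi_boundary
    (hC : ∀ u : Vertex n m, (u.1.val = 0 ∨ u.1.val = n ∨ u.2.val = 0 ∨ u.2.val = m) →
      ¬ (DiagGraph Set.univ f).Reachable v u)
    {q : ℤ × ℤ} (hq : q.1 ≤ 0 ∨ (n:ℤ) ≤ q.1 ∨ q.2 ≤ 0 ∨ (m:ℤ) ≤ q.2) : chi f v q = 0 := by
  unfold chi
  rw [if_neg]
  rintro ⟨u, hu, rfl⟩
  have h1 := u.1.isLt
  have h2 := u.2.isLt
  refine hC u ?_ hu
  simp only [coordsZ] at hq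
  omega

lemma chi_adjZ {a b : ℤ × ℤ} (h : adjZ f a b) : chi f v a = chi f v b := by
  obtain ⟨x, y, hxy, rfl, rfl⟩ := h
  unfold chi
  by_cases hp : ∃ u : Vertex n m, (DiagGraph Set.univ f).Reachable v u ∧ coordsZ u = coordsZ x
  · rw [if_pos hp, if_pos]
    obtain ⟨u, hu, he⟩ := hp
    exact ⟨y, ((coordsZ_injective he) ▸ hu).trans hxy.reachable, rfl⟩
  · rw [if_neg hp, if_neg]
    rintro ⟨u, hu, he⟩
    exact hp ⟨x, ((coordsZ_injective he) ▸ hu).trans hxy.symm.reachable, rfl⟩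

lemma chi_self (hreach : (DiagGraph Set.univ f).Reachable v v) :
    chi f v (coordsZ v) = 1 := by
  unfold chi
  rw [if_pos ⟨v, hreach, rfl⟩]

end Chi

section Divergence

open SimpleGraph
variable {n m : ℕ} (f : Cell n m → Bool) {v : Vertex n m}

variable (hC : ∀ u : Vertex n m, (u.1.val = 0 ∨ u.1.val = n ∨ u.2.val = 0 ∨ u.2.val = m) →
      ¬ (DiagGraph Set.univ f).Reachable v u)

lemma gam_eval_anti (χ : ℤ × ℤ → ℤ) (x y : ℤ) :
    gam χ (x + 1, y) (x, y + 1) = χ (x, y) - χ (x + 1, y + 1) := by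
  simp only [gam]
  ring

include hC

open Classical in
lemma dir_NE (w1 w2 : ℤ) :
    (if adjZ f (w1, w2) (w1+1, w2+1) then gam (chi f v) (w1, w2) (w1+1, w2+1) else 0)
      = chi f v (w1, w2+1) - chi f v (w1+1, w2) := by
  split_ifs with h
  · simp only [gam]
    ring
  · have key : chi f v (w1, w2+1) = chi f v (w1+1, w2) := by
      by_cases hb : 0 ≤ w1 ∧ w1 < (n:ℤ) ∧ 0 ≤ w2 ∧ w2 < (m:ℤ)
      · obtain ⟨hb1, hb2, hb3, hb4⟩ := hb
        obtain ⟨i, rfl⟩ : ∃ i : ℕ, w1 = (i:ℤ) := ⟨w1.toNat, by omega⟩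
        obtain ⟨j, rfl⟩ : ∃ j : ℕ, w2 = (j:ℤ) := ⟨w2.toNat, by omega⟩
        have hi : i < n := by exact_mod_cast hb2
        have hj : j < m := by exact_mod_cast hb4
        rcases cell_adjZ f i j hi hj with hA | hB
        · exact absurd hA h
        · exact (chi_adjZ f hB).symm
      · rw [chi_boundary f hC (by simp; omega), chi_boundary f hC (by simp; omega)]
    rw [key]; ring

open Classical in
lemma dir_SE (w1 w2 : ℤ) :
    (if adjZ f (w1, w2) (w1+1, w2-1) then gam (chi f v) (w1, w2) (w1+1, w2-1) else 0)
      = chi f v (w1+1, w2) - chi f v (w1, w2-1) := by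
  split_ifs with h
  · simp only [gam]
    ring
  · have key : chi f v (w1, w2-1) = chi f v (w1+1, w2) := by
      by_cases hb : 0 ≤ w1 ∧ w1 < (n:ℤ) ∧ 0 ≤ w2 - 1 ∧ w2 - 1 < (m:ℤ)
      · obtain ⟨hb1, hb2, hb3, hb4⟩ := hb
        obtain ⟨i, rfl⟩ : ∃ i : ℕ, w1 = (i:ℤ) := ⟨w1.toNat, by omega⟩
        obtain ⟨j, hw2⟩ : ∃ j : ℕ, w2 = (j:ℤ) + 1 := ⟨(w2-1).toNat, by omega⟩
        subst hw2
        have hi : i < n := by exact_mod_cast hb2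
        have hj : j < m := by omega
        simp only [add_sub_cancel_right] at h ⊢
        rcases cell_adjZ f i j hi hj with hA | hB
        · exact chi_adjZ f hA
        · exact absurd (adjZ_symm f hB) h
      · rw [chi_boundary f hC (by simp; omega), chi_boundary f hC (by simp; omega)]
    rw [key]; ring

open Classical in
lemma dir_NW (w1 w2 : ℤ) :
    (if adjZ f (w1, w2) (w1-1, w2+1) then gam (chi f v) (w1, w2) (w1-1, w2+1) else 0)
      = chi f v (w1-1, w2) - chi f v (w1, w2+1) := by
  split_ifs with h
  · simp only [gam]
    ring
  · have key : chi f v (w1-1, w2) = chi f v (w1, w2+1) := by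
      by_cases hb : 0 ≤ w1 - 1 ∧ w1 - 1 < (n:ℤ) ∧ 0 ≤ w2 ∧ w2 < (m:ℤ)
      · obtain ⟨hb1, hb2, hb3, hb4⟩ := hb
        obtain ⟨i, hw1⟩ : ∃ i : ℕ, w1 = (i:ℤ) + 1 := ⟨(w1-1).toNat, by omega⟩
        obtain ⟨j, rfl⟩ : ∃ j : ℕ, w2 = (j:ℤ) := ⟨w2.toNat, by omega⟩
        subst hw1
        have hi : i < n := by omega
        have hj : j < m := by exact_mod_cast hb4
        simp only [add_sub_cancel_right] at h ⊢
        rcases cell_adjZ f i j hi hj with hA | hB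
        · exact chi_adjZ f hA
        · exact absurd hB h
      · rw [chi_boundary f hC (by simp; omega), chi_boundary f hC (by simp; omega)]
    rw [key]; ring

open Classical in
lemma dir_SW (w1 w2 : ℤ) :
    (if adjZ f (w1, w2) (w1-1, w2-1) then gam (chi f v) (w1, w2) (w1-1, w2-1) else 0)
      = chi f v (w1, w2-1) - chi f v (w1-1, w2) := by
  split_ifs with h
  · simp only [gam]
    ring
  · have key : chi f v (w1, w2-1) = chi f v (w1-1, w2) := by
      by_cases hb : 0 ≤ w1 - 1 ∧ w1 - 1 < (n:ℤ) ∧ 0 ≤ w2 - 1 ∧ w2 - 1 < (m:ℤ)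
      · obtain ⟨hb1, hb2, hb3, hb4⟩ := hb
        obtain ⟨i, hw1⟩ : ∃ i : ℕ, w1 = (i:ℤ) + 1 := ⟨(w1-1).toNat, by omega⟩
        obtain ⟨j, hw2⟩ : ∃ j : ℕ, w2 = (j:ℤ) + 1 := ⟨(w2-1).toNat, by omega⟩
        subst hw1; subst hw2
        have hi : i < n := by omega
        have hj : j < m := by omega
        simp only [add_sub_cancel_right] at h ⊢
        rcases cell_adjZ f i j hi hj with hA | hB
        · exact absurd (adjZ_symm f hA) h
        · exact chi_adjZ f hB
      · rw [chi_boundary f hC (by simp; omega), chi_boundary f hC (by simp; omega)]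
    rw [key]; ring

open Classical in
lemma zdiv_eq_zero (w : ℤ × ℤ) :
    ∑ d ∈ D4, (if adjZ f w (w + d) then gam (chi f v) w (w + d) else 0) = 0 := by
  obtain ⟨w1, w2⟩ := w
  have hD : D4 = ({(1,1), (1,-1), (-1,1), (-1,-1)} : Finset (ℤ × ℤ)) := rfl
  rw [hD, Finset.sum_insert (by decide), Finset.sum_insert (by decide),
    Finset.sum_insert (by decide), Finset.sum_singleton]
  have e1 : ((w1, w2) : ℤ × ℤ) + (1, 1) = (w1+1, w2+1) := rfl
  have e2 : ((w1, w2) : ℤ × ℤ) + (1, -1) = (w1+1, w2-1) := rfl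
  have e3 : ((w1, w2) : ℤ × ℤ) + (-1, 1) = (w1-1, w2+1) := rfl
  have e4 : ((w1, w2) : ℤ × ℤ) + (-1, -1) = (w1-1, w2-1) := rfl
  rw [e1, e2, e3, e4, dir_NE f hC w1 w2, dir_SE f hC w1 w2, dir_NW f hC w1 w2,
    dir_SW f hC w1 w2]
  ring

end Divergence

/-! ### The main theorem -/

open SimpleGraph in
/-- In an acyclic full assignment on a board with `n, m ≥ 1`, every
vertex is connected in the diagonal graph to some boundary vertex; i.e. every connected
component contains a boundary vertex. -/
theorem component_touches_boundary (n m : ℕ) (hn : 1 ≤ n) (hm : 1 ≤ m)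
    (f : Cell n m → Bool)
    (hf : (DiagGraph (Set.univ : Set (Cell n m)) f).IsAcyclic) :
    ∀ v : Vertex n m, ∃ u : Vertex n m,
      (u.1.val = 0 ∨ u.1.val = n ∨ u.2.val = 0 ∨ u.2.val = m) ∧
      (DiagGraph (Set.univ : Set (Cell n m)) f).Reachable v u := by
  classical
  intro v
  by_contra hC0
  push_neg at hC0
  have hC : ∀ u : Vertex n m, (u.1.val = 0 ∨ u.1.val = n ∨ u.2.val = 0 ∨ u.2.val = m) →
      ¬ (DiagGraph (Set.univ : Set (Cell n m)) f).Reachable v u := fun u hb hr =>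
    (hC0 u) hb hr
  set G := DiagGraph (Set.univ : Set (Cell n m)) f with hGdef
  set χ : ℤ × ℤ → ℤ := chi f v with hχdef
  set σ : Vertex n m → Vertex n m → ℤ := fun a b => gam χ (coordsZ a) (coordsZ b) with hσdef
  have hσanti : ∀ a b : Vertex n m, σ a b = - σ b a := fun a b => gam_antisymm χ _ _
  obtain ⟨φ, hφ⟩ := exists_potential hf σ (fun a b _ => hσanti a b)
  -- divergence is zero at every vertex
  have hdiv : ∀ u : Vertex n m, ∑ x : Vertex n m, (if G.Adj u x then σ u x else 0) = 0 := by
    intro u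
    have hz := zdiv_eq_zero f hC (coordsZ u)
    refine Eq.trans ?_ hz
    refine Finset.sum_bij_ne_zero (fun x _ _ => coordsZ x - coordsZ u) ?_ ?_ ?_ ?_
    · intro x _ hx
      have hadj : G.Adj u x := by
        by_contra hcon
        rw [if_neg hcon] at hx
        exact hx rfl
      exact adj_sub_mem f hadj
    · intro x1 _ _ x2 _ _ he
      have hcc : coordsZ x1 = coordsZ x2 := by
        have h2 := congrArg (fun z : ℤ × ℤ => z + coordsZ u) he
        simpa using h2
      exact coordsZ_injective hcc
    · intro d _ hgd
      have hadjZ : adjZ f (coordsZ u) (coordsZ u + d) := by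
        by_contra hcon
        rw [if_neg hcon] at hgd
        exact hgd rfl
      obtain ⟨a, b, hab, ha, hb⟩ := hadjZ
      have hau : a = u := coordsZ_injective ha
      have hab' : G.Adj u b := hau ▸ hab
      refine ⟨b, Finset.mem_univ b, ?_, ?_⟩
      · rw [if_pos hab']
        rw [if_pos ⟨a, b, hab, ha, hb⟩] at hgd
        show gam χ (coordsZ u) (coordsZ b) ≠ 0
        rw [hb]
        exact hgd
      · show coordsZ b - coordsZ u = d
        rw [hb, ← ha]
        ring
    · intro x _ hx
      have hadj : G.Adj u x := by
        by_contra hcon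
        rw [if_neg hcon] at hx
        exact hx rfl
      have hcz : coordsZ u + (coordsZ x - coordsZ u) = coordsZ x := by ring
      rw [if_pos hadj, hcz, if_pos ⟨u, x, hadj, rfl, rfl⟩]
  -- the global pairing is zero
  have hS0 : (∑ u : Vertex n m, ∑ x : Vertex n m,
      (if G.Adj u x then σ u x * (φ x - φ u) else 0)) = 0 := by
    have hsplit : ∀ u x : Vertex n m,
        (if G.Adj u x then σ u x * (φ x - φ u) else 0) =
          (if G.Adj u x then σ u x else 0) * φ x - (if G.Adj u x then σ u x else 0) * φ u := by
      intro u x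
      split_ifs <;> ring
    calc (∑ u : Vertex n m, ∑ x : Vertex n m,
        (if G.Adj u x then σ u x * (φ x - φ u) else 0))
        = (∑ u : Vertex n m, ∑ x : Vertex n m, (if G.Adj u x then σ u x else 0) * φ x)
          - ∑ u : Vertex n m, ∑ x : Vertex n m, (if G.Adj u x then σ u x else 0) * φ u := by
          rw [← Finset.sum_sub_distrib]
          refine Finset.sum_congr rfl fun u _ => ?_
          rw [← Finset.sum_sub_distrib]
          exact Finset.sum_congr rfl fun x _ => hsplit u x
      _ = 0 - 0 := by
          congr 1
          · rw [Finset.sum_comm]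
            refine Finset.sum_eq_zero fun x _ => ?_
            have hpoint : ∀ u : Vertex n m, (if G.Adj u x then σ u x else 0) * φ x =
                (-(if G.Adj x u then σ x u else 0)) * φ x := by
              intro u
              congr 1
              rw [G.adj_comm u x]
              split_ifs with hh
              · rw [hσanti]
              · ring
            rw [Finset.sum_congr rfl fun u _ => hpoint u, ← Finset.sum_mul,
              Finset.sum_neg_distrib, hdiv x]
            ring
          · refine Finset.sum_eq_zero fun u _ => ?_
            rw [← Finset.sum_mul, hdiv u]
            ring
      _ = 0 := by ring
  -- nonnegativity of each term
  have hterm : ∀ u x : Vertex n m, 0 ≤ (if G.Adj u x then σ u x * (φ x - φ u) else 0) := by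
    intro u x
    split_ifs with h
    · rw [hφ u x h]
      exact mul_self_nonneg _
    · exact le_refl 0
  -- existence of an edge with σ = 1
  obtain ⟨o₁, o₂, hadj, hval⟩ :
      ∃ o₁ o₂ : Vertex n m, G.Adj o₁ o₂ ∧ σ o₁ o₂ = 1 := by
    have hne : (Finset.univ.filter (fun u : Vertex n m => G.Reachable v u)).Nonempty :=
      ⟨v, Finset.mem_filter.mpr ⟨Finset.mem_univ v, SimpleGraph.Reachable.refl v⟩⟩
    obtain ⟨z, hzmem, hzmax⟩ := Finset.exists_max_image _
      (fun u : Vertex n m => u.1.val * (m+1) + u.2.val) hne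
    have hzreach : G.Reachable v z := (Finset.mem_filter.mp hzmem).2
    have hmax : ∀ u : Vertex n m, G.Reachable v u →
        u.1.val * (m+1) + u.2.val ≤ z.1.val * (m+1) + z.2.val := fun u hu =>
      hzmax u (Finset.mem_filter.mpr ⟨Finset.mem_univ u, hu⟩)
    have hnb : ¬(z.1.val = 0 ∨ z.1.val = n ∨ z.2.val = 0 ∨ z.2.val = m) := fun hb =>
      hC z hb hzreach
    have hlt1 := z.1.isLt
    have hlt2 := z.2.isLt
    have hz1 : z.1.val < n := by omega
    have hz2 : z.2.val < m := by omega
    rcases diag_cases f (⟨z.1.val, hz1⟩, ⟨z.2.val, hz2⟩) with hd | hd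
    · exfalso
      have hadj0 := adj_of_ends f hd (ne_00_11 _)
      have h00 : corner00 ((⟨z.1.val, hz1⟩, ⟨z.2.val, hz2⟩) : Cell n m) = z := by
        simp [corner00, Prod.ext_iff, Fin.ext_iff]
      rw [h00] at hadj0
      have hr11 : G.Reachable v (corner11 ((⟨z.1.val, hz1⟩, ⟨z.2.val, hz2⟩) : Cell n m)) :=
        hzreach.trans hadj0.reachable
      have hle := hmax _ hr11
      simp [corner11, Fin.val_succ] at hle
      have hexp : (z.1.val + 1) * (m + 1) = z.1.val * (m + 1) + (m + 1) := by ring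
      omega
    · refine ⟨corner10 _, corner01 _, adj_of_ends f hd (ne_10_01 _), ?_⟩
      have e10 : coordsZ (corner10 ((⟨z.1.val, hz1⟩, ⟨z.2.val, hz2⟩) : Cell n m)) =
          ((z.1.val : ℤ) + 1, (z.2.val : ℤ)) := coordsZ_corner10 _
      have e01 : coordsZ (corner01 ((⟨z.1.val, hz1⟩, ⟨z.2.val, hz2⟩) : Cell n m)) =
          ((z.1.val : ℤ), (z.2.val : ℤ) + 1) := coordsZ_corner01 _
      have hchi1 : chi f v ((z.1.val : ℤ), (z.2.val : ℤ)) = 1 := by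
        unfold chi
        rw [if_pos ⟨z, hzreach, rfl⟩]
      have hchi0 : chi f v ((z.1.val : ℤ) + 1, (z.2.val : ℤ) + 1) = 0 := by
        unfold chi
        rw [if_neg]
        rintro ⟨u, hu, hcoords⟩
        simp only [coordsZ, Prod.mk.injEq] at hcoords
        have hle := hmax u hu
        have h1 : u.1.val = z.1.val + 1 := by omega
        have hexp : u.1.val * (m + 1) = z.1.val * (m + 1) + (m + 1) := by rw [h1]; ring
        omega
      show gam χ (coordsZ (corner10 _)) (coordsZ (corner01 _)) = 1
      rw [e10, e01, gam_eval_anti, hχdef, hchi1, hchi0]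
      ring
  have hpos : 0 < (∑ u : Vertex n m, ∑ x : Vertex n m,
      (if G.Adj u x then σ u x * (φ x - φ u) else 0)) := by
    refine Finset.sum_pos' (fun u _ => Finset.sum_nonneg fun x _ => hterm u x)
      ⟨o₁, Finset.mem_univ o₁, ?_⟩
    refine Finset.sum_pos' (fun x _ => hterm o₁ x) ⟨o₂, Finset.mem_univ o₂, ?_⟩
    rw [if_pos hadj, hφ o₁ o₂ hadj, hval]
    norm_num
  rw [hS0] at hpos
  exact lt_irrefl 0 hpos

end Slant
end

section
/- Let f be a full assignment on an n×m Slant board whose diagonal graph G(f) is acyclic, and let v = (x,y) be a vertex with x+y even, 1 ≤ y ≤ m−1 and x+2 ≤ n, such that all cells having v as a corner have their chosen diagonal passing through v (so v has degree 4 in G(f)). Then the vertex u = (x+2,y) is not adjacent in G(f) to both (x+1,y+1) and (x+1,y−1); that is, a vertex diagonally across from a degree-4 vertex cannot have both of its edges along the shared square, since these edges together with two of v's edges would form a 4-cycle. -/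
/-!
Slant boards.

An `n×m` Slant board has cells indexed by `Fin n × Fin m` and vertices indexed by
`Fin (n+1) × Fin (m+1)`.  The four corners of cell `(i,j)` are the vertices
`(i,j)`, `(i+1,j)`, `(i,j+1)`, `(i+1,j+1)`.  A full assignment is a function from
cells to `Bool`: `true` means the cell contains the diagonal joining its two
corners with even coordinate sums, `false` the other diagonal.
-/

namespace Slant

variable {n m : ℕ}

/-- If `v = (x,y)` (with `x+y` even, `1 ≤ y ≤ m−1`, `x+2 ≤ n`) has all
four incident cells' chosen diagonals through it, then in an acyclic diagonal graph the
vertex `u = (x+2,y)` cannot be adjacent to both `(x+1,y+1)` and `(x+1,y−1)`, since these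
two edges would close a `4`-cycle with two of `v`'s edges. -/
theorem no_two_edges_across_degree_four (n m : ℕ) (f : Cell n m → Bool)
    (hf : (DiagGraph (Set.univ : Set (Cell n m)) f).IsAcyclic)
    (v u w₁ w₂ : Vertex n m)
    (hpar : (v.1.val + v.2.val) % 2 = 0)
    (hy1 : 1 ≤ v.2.val) (hy2 : v.2.val ≤ m - 1) (hx : v.1.val + 2 ≤ n)
    (hfull : ∀ c : Cell n m, isCorner v c → passesThrough f c v)
    (hu1 : u.1.val = v.1.val + 2) (hu2 : u.2.val = v.2.val)
    (hw11 : w₁.1.val = v.1.val + 1) (hw12 : w₁.2.val = v.2.val + 1)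
    (hw21 : w₂.1.val = v.1.val + 1) (hw22 : w₂.2.val + 1 = v.2.val) :
    ¬ ((DiagGraph (Set.univ : Set (Cell n m)) f).Adj u w₁ ∧
        (DiagGraph (Set.univ : Set (Cell n m)) f).Adj u w₂) := by

  rintro ⟨h1, h2⟩
  have hvm : v.2.val < m := by have := v.2.isLt; omega
  have hvn : v.1.val < n := by omega
  set G := DiagGraph (Set.univ : Set (Cell n m)) f with hG
  -- cell above-right of v
  set c₁ : Cell n m := (⟨v.1.val, hvn⟩, ⟨v.2.val, hvm⟩) with hc₁
  set c₂ : Cell n m := (⟨v.1.val, hvn⟩, ⟨v.2.val - 1, by omega⟩) with hc₂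
  have hcor1 : isCorner v c₁ := by
    left
    apply Prod.ext <;> apply Fin.ext <;> simp [corner00, hc₁]
  have hcor2 : isCorner v c₂ := by
    right; right; left
    apply Prod.ext <;> apply Fin.ext <;> simp [corner01, hc₂] <;> omega
  have hpar1 : (c₁.1.val + c₁.2.val) % 2 = 0 := by simp [hc₁]; omega
  have hpar2 : ¬ (c₂.1.val + c₂.2.val) % 2 = 0 := by simp [hc₂]; omega
  have hf1 : f c₁ = true := by
    by_contra hb
    have := hfull c₁ hcor1
    rw [passesThrough, diagEnds] at this
    rw [if_neg hb, oddDiag, if_pos hpar1] at this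
    rcases this with h | h
    · have := congrArg (fun z => z.1.val) h
      simp [corner10, hc₁] at this
    · have := congrArg (fun z => z.2.val) h
      simp [corner01, hc₁] at this
  have hf2 : f c₂ = true := by
    by_contra hb
    have := hfull c₂ hcor2
    rw [passesThrough, diagEnds] at this
    rw [if_neg hb, oddDiag, if_neg hpar2] at this
    rcases this with h | h
    · have := congrArg (fun z => z.2.val) h
      simp [corner00, hc₂] at this
      omega
    · have := congrArg (fun z => z.1.val) h
      simp [corner11, hc₂] at this
  have hvw1 : v ≠ w₁ := by
    intro h; rw [h] at hw11; omega
  have hvw2 : v ≠ w₂ := by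
    intro h; rw [h] at hw21; omega
  have hvu : v ≠ u := by
    intro h; rw [h] at hu1; omega
  have hw1u : w₁ ≠ u := by
    intro h; rw [← h] at hu1; omega
  have hw2u : w₂ ≠ u := by
    intro h; rw [← h] at hu1; omega
  have hw12' : w₁ ≠ w₂ := by
    intro h; rw [h] at hw12; omega
  have ha1 : G.Adj v w₁ := by
    rw [hG, DiagGraph, SimpleGraph.fromRel_adj]
    refine ⟨hvw1, Or.inl ⟨c₁, Set.mem_univ _, ?_⟩⟩
    rw [diagEnds, if_pos hf1, evenDiag, if_pos hpar1]
    refine Prod.ext ?_ ?_ <;>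
      apply Prod.ext <;> apply Fin.ext <;>
      simp [corner00, corner11, hc₁, hw11, hw12]
  have ha2 : G.Adj v w₂ := by
    rw [hG, DiagGraph, SimpleGraph.fromRel_adj]
    refine ⟨hvw2, Or.inr ⟨c₂, Set.mem_univ _, ?_⟩⟩
    rw [diagEnds, if_pos hf2, evenDiag, if_neg hpar2]
    refine Prod.ext ?_ ?_ <;>
      apply Prod.ext <;> apply Fin.ext <;>
      simp [corner10, corner01, hc₂, hw21] <;> omega
  have h1' : G.Adj w₁ u := h1.symm
  have h2' : G.Adj w₂ u := h2.symm
  let p₁ : G.Walk v u := .cons ha1 (.cons h1' .nil)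
  let p₂ : G.Walk v u := .cons ha2 (.cons h2' .nil)
  have hp₁ : p₁.IsPath := by
    simp [p₁, SimpleGraph.Walk.isPath_def]
    exact ⟨⟨hvw1, hvu⟩, hw1u⟩
  have hp₂ : p₂.IsPath := by
    simp [p₂, SimpleGraph.Walk.isPath_def]
    exact ⟨⟨hvw2, hvu⟩, hw2u⟩
  have := SimpleGraph.isAcyclic_iff_path_unique.mp hf ⟨p₁, hp₁⟩ ⟨p₂, hp₂⟩
  have hsup : p₁.support = p₂.support := by
    rw [show p₁ = p₂ from congrArg Subtype.val this]
  simp [p₁, p₂] at hsup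
  exact hw12' hsup

end Slant
end
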